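/- arXiv:1506.01435 — 2 statements merged into one kernel-verified Lean document; each statement's English description precedes it below -/
import Mathlib

section
/- (Uniqueness half of Proposition 3.5.) Let G be a discrete submonoid of ℝ≥0, let (C̄, {m_{k,λ}}) be a G-gapped filtered A∞-algebra over ℤ/2 in coefficientwise form, let (D̄, {n_{k,λ}}) be a G-gapped right filtered A∞-module over it, and let 𝟏 = (𝟏_λ)_{λ∈G} be a G-gapped cyclic element of D. If b = (b_λ) and b′ = (b′_λ) are G-gapped elements of C ⊗ Λ₊ with d^b(𝟏) = 0 and d^{b′}(𝟏) = 0, then b = b′, i.e. b_λ = b′_λ for every positive λ ∈ G. -/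
open scoped BigOperators

/-- A *discrete submonoid* of `ℝ≥0`: a set of nonnegative reals containing `0`,
closed under addition, and meeting every interval `[0, E]` in a finite set. -/
structure IsDiscreteSubmonoid (G : Set ℝ) : Prop where
  zero_mem : (0 : ℝ) ∈ G
  nonneg : ∀ x ∈ G, 0 ≤ x
  add_mem : ∀ x ∈ G, ∀ y ∈ G, x + y ∈ G
  finite_le : ∀ E : ℝ, {x | x ∈ G ∧ x ≤ E}.Finite

/-- `ℤ/2`-multilinearity of a family of operations `m k λ : C̄^k → C̄`, where a `k`-tuple of
elements of `C̄` is encoded as a function `ℕ → C` of which only the first `k` values matter: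
`m k λ` depends only on the first `k` arguments and is additive in each of them
(over `ℤ/2` every additive map is linear). -/
def OpsMultilinear {C : Type*} [AddCommGroup C] (m : ℕ → ℝ → (ℕ → C) → C) : Prop :=
  (∀ (k : ℕ) (lam : ℝ) (x y : ℕ → C), (∀ i < k, x i = y i) → m k lam x = m k lam y) ∧
  (∀ (k : ℕ) (lam : ℝ) (x : ℕ → C) (i : ℕ), i < k → ∀ a b : C,
    m k lam (Function.update x i (a + b)) =
      m k lam (Function.update x i a) + m k lam (Function.update x i b))

/-- `ℤ/2`-multilinearity of a family of operations `n k λ : D̄ × C̄^k → Ē`. -/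
def ModOpsMultilinear {C D E : Type*} [AddCommGroup C] [AddCommGroup D] [AddCommGroup E]
    (n : ℕ → ℝ → D → (ℕ → C) → E) : Prop :=
  (∀ (k : ℕ) (lam : ℝ) (y : D) (x x' : ℕ → C),
      (∀ i < k, x i = x' i) → n k lam y x = n k lam y x') ∧
  (∀ (k : ℕ) (lam : ℝ) (y y' : D) (x : ℕ → C),
      n k lam (y + y') x = n k lam y x + n k lam y' x) ∧
  (∀ (k : ℕ) (lam : ℝ) (y : D) (x : ℕ → C) (i : ℕ), i < k → ∀ a b : C,
    n k lam y (Function.update x i (a + b)) =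
      n k lam y (Function.update x i a) + n k lam y (Function.update x i b))

/-- The tuple `(x₁, …, x_j, c, x_{j+k₂+1}, …, x_k)` obtained from `(x₁, …, x_k)` by replacing
the `k₂` consecutive entries starting at (0-based) position `j` by the single entry `c`. -/
def insertAt {C : Type*} (x : ℕ → C) (j k₂ : ℕ) (c : C) : ℕ → C :=
  fun i => if i < j then x i else if i = j then c else x (i + k₂ - 1)

/-- A `G`-gapped filtered `A∞`-algebra over `ℤ/2` in coefficientwise form: the operations are
multilinear, `m_{0,0} = 0`, and for every `λ ∈ G` the coefficient of `T^λ` of the filtered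
`A∞`-relation holds (no signs: coefficients are in `ℤ/2`). -/
def IsGappedAInfAlgebra (G : Set ℝ) {C : Type*} [AddCommGroup C] [Module (ZMod 2) C]
    (m : ℕ → ℝ → (ℕ → C) → C) : Prop :=
  OpsMultilinear m ∧
  (∀ x : ℕ → C, m 0 0 x = 0) ∧
  (∀ lam ∈ G, ∀ (k : ℕ) (x : ℕ → C),
    (∑ᶠ (μ : ℝ) (ν : ℝ) (k₂ : ℕ) (j : ℕ)
        (_ : μ ∈ G ∧ ν ∈ G ∧ μ + ν = lam ∧ j + k₂ ≤ k),
      m (k + 1 - k₂) μ (insertAt x j k₂ (m k₂ ν fun t => x (j + t)))) = 0)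

/-- A `G`-gapped right filtered `A∞`-module `(D̄, n)` over `(C̄, m)` in coefficientwise form. -/
def IsGappedAInfModule (G : Set ℝ) {C D : Type*} [AddCommGroup C] [Module (ZMod 2) C]
    [AddCommGroup D] [Module (ZMod 2) D]
    (m : ℕ → ℝ → (ℕ → C) → C) (n : ℕ → ℝ → D → (ℕ → C) → D) : Prop :=
  ModOpsMultilinear n ∧
  (∀ lam ∈ G, ∀ (k : ℕ) (y : D) (x : ℕ → C),
    (∑ᶠ (μ : ℝ) (ν : ℝ) (ℓ : ℕ)
        (_ : μ ∈ G ∧ ν ∈ G ∧ μ + ν = lam ∧ ℓ ≤ k),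
      n (k - ℓ) μ (n ℓ ν y x) fun t => x (ℓ + t))
    +
    (∑ᶠ (μ : ℝ) (ν : ℝ) (k₂ : ℕ) (j : ℕ)
        (_ : μ ∈ G ∧ ν ∈ G ∧ μ + ν = lam ∧ j + k₂ ≤ k),
      n (k + 1 - k₂) μ y (insertAt x j k₂ (m k₂ ν fun t => x (j + t)))) = 0)

/-- A `G`-gapped *cyclic element* `𝟏 = (𝟏_λ)_{λ∈G}` of `D`:
(i) `x ↦ n_{1,0}(𝟏₀; x)` is a bijection `C̄ → D̄`, and (ii) `n_{0,0}(𝟏₀) = 0`. -/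
def IsCyclicElement {C D : Type*} [AddCommGroup C] [AddCommGroup D]
    (n : ℕ → ℝ → D → (ℕ → C) → D) (one : ℝ → D) : Prop :=
  Function.Bijective (fun x : C => n 1 0 (one 0) fun _ => x) ∧
  (∀ x : ℕ → C, n 0 0 (one 0) x = 0)

/-- The tuple `(b_{v 0}, …, b_{v (k-1)})` of values of a `G`-gapped element `b` of `C ⊗ Λ₊`
(encoded as a function `b : ℝ → C`, of which only the values at positive elements of `G`
matter), encoded as a function `ℕ → C`. -/
def bVec {C : Type*} [Zero C] (b : ℝ → C) {k : ℕ} (v : Fin k → ℝ) : ℕ → C :=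
  fun t => if h : t < k then b (v ⟨t, h⟩) else 0

/-- The Maurer–Cartan equation for a `G`-gapped element `b` of `C ⊗ Λ₊`: for every positive
`λ ∈ G`, the sum of `m_{k,μ}(b_{λ₁}, …, b_{λ_k})` over all `k ≥ 0`, `μ ∈ G` and positive
`λ₁, …, λ_k ∈ G` with `μ + λ₁ + ⋯ + λ_k = λ` vanishes. -/
def IsBoundingCochain (G : Set ℝ) {C : Type*} [AddCommGroup C]
    (m : ℕ → ℝ → (ℕ → C) → C) (b : ℝ → C) : Prop :=
  ∀ lam ∈ G, 0 < lam →
    (∑ᶠ (k : ℕ) (μ : ℝ) (v : Fin k → ℝ)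
        (_ : μ ∈ G ∧ (∀ i, v i ∈ G ∧ 0 < v i) ∧ μ + ∑ i, v i = lam),
      m k μ (bVec b v)) = 0

/-- The equation `d^b(𝟏) = 0` in coefficientwise form: for every `λ ∈ G`, the sum of
`n_{k,μ}(𝟏_ν; b_{λ₁}, …, b_{λ_k})` over all `k ≥ 0`, `μ, ν ∈ G` and positive
`λ₁, …, λ_k ∈ G` with `μ + ν + λ₁ + ⋯ + λ_k = λ` vanishes. -/
def KillsOne (G : Set ℝ) {C D : Type*} [AddCommGroup C] [AddCommGroup D]
    (n : ℕ → ℝ → D → (ℕ → C) → D) (one : ℝ → D) (b : ℝ → C) : Prop :=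
  ∀ lam ∈ G,
    (∑ᶠ (k : ℕ) (μ : ℝ) (ν : ℝ) (v : Fin k → ℝ)
        (_ : μ ∈ G ∧ ν ∈ G ∧ (∀ i, v i ∈ G ∧ 0 < v i) ∧ μ + ν + ∑ i, v i = lam),
      n k μ (one ν) (bVec b v)) = 0


/-! A `G`-gapped element is determined inductively along the discrete set `G`: in the
`T^λ`-coefficient of `d^b(𝟏) = 0` the only term involving `b_λ` is `n_{1,0}(𝟏₀; b_λ)`, every
other term involves only `b_μ` with `μ < λ`. Comparing the equations for `b` and `b'`, once
`b_μ = b'_μ` for all `μ < λ` all these other terms cancel, so `n_{1,0}(𝟏₀; b_λ) =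
n_{1,0}(𝟏₀; b'_λ)` and injectivity of `x ↦ n_{1,0}(𝟏₀; x)` gives `b_λ = b'_λ`. Discreteness of `G`
makes every coefficient a finite sum and makes the induction well founded. -/

open Function

lemma exists_ne_zero_of_finsum_ne_zero {α M : Type*} [AddCommMonoid M] {f : α → M}
    (h : ∑ᶠ x, f x ≠ 0) : ∃ x, f x ≠ 0 := by
  by_contra! hf
  exact h (finsum_eq_zero_of_forall_eq_zero hf)

lemma finsum_sub_finsum_of_forall_ne {α M : Type*} [AddCommGroup M] {f g : α → M} (a : α)
    (hf : (support f).Finite) (hfg : ∀ x ≠ a, f x = g x) :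
    ∑ᶠ x, f x - ∑ᶠ x, g x = f a - g a := by
  have hg : (support g).Finite := (hf.insert a).subset fun x hx => by
    by_cases hxa : x = a
    · exact .inl hxa
    · exact .inr (by rwa [mem_support, ← hfg x hxa] at hx)
  rw [← finsum_sub_distrib hf hg]
  exact finsum_eq_single _ a fun x hx => sub_eq_zero.2 (hfg x hx)

namespace IsDiscreteSubmonoid

variable {G : Set ℝ}

theorem induction (hG : IsDiscreteSubmonoid G) {P : ℝ → Prop}
    (h : ∀ x ∈ G, (∀ y ∈ G, y < x → P y) → P x) : ∀ x ∈ G, P x := by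
  by_contra! ⟨x, hx, hPx⟩
  obtain ⟨y, ⟨hy, hyx, hPy⟩, hmin⟩ := Set.exists_min_image {y | y ∈ G ∧ y ≤ x ∧ ¬P y} id
    ((hG.finite_le x).subset fun y hy => ⟨hy.1, hy.2.1⟩) ⟨x, hx, le_rfl, hPx⟩
  refine hPy (h y hy fun z hz hzy => ?_)
  by_contra hPz
  exact (hmin z ⟨hz, hzy.le.trans hyx, hPz⟩).not_gt hzy

theorem exists_pos_le (hG : IsDiscreteSubmonoid G) (lam : ℝ) :
    ∃ δ > 0, ∀ x ∈ G, 0 < x → x ≤ lam → δ ≤ x := by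
  have hS : {x | x ∈ G ∧ 0 < x ∧ x ≤ lam}.Finite :=
    (hG.finite_le lam).subset fun x hx => ⟨hx.1, hx.2.2⟩
  have hδ : ∀ᶠ δ in nhdsWithin (0 : ℝ) (Set.Ioi 0), ∀ x ∈ {x | x ∈ G ∧ 0 < x ∧ x ≤ lam}, δ ≤ x :=
    hS.eventually_all.2 fun x hx => nhdsWithin_le_nhds (eventually_le_nhds hx.2.1)
  obtain ⟨δ, hle, hpos⟩ := (hδ.and self_mem_nhdsWithin).exists
  exact ⟨δ, hpos, fun x hx hxpos hxle => hle x ⟨hx, hxpos, hxle⟩⟩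

theorem exists_card_le (hG : IsDiscreteSubmonoid G) (lam : ℝ) :
    ∃ N : ℕ, ∀ (k : ℕ) (v : Fin k → ℝ), (∀ i, v i ∈ G ∧ 0 < v i) → ∑ i, v i ≤ lam → k ≤ N := by
  obtain ⟨δ, hδ, hle⟩ := hG.exists_pos_le lam
  refine ⟨⌊lam / δ⌋₊, fun k v hv hsum => Nat.le_floor ((le_div_iff₀ hδ).2 ?_)⟩
  have hvle : ∀ i, v i ≤ lam := fun i =>
    (Finset.single_le_sum (fun j _ => (hv j).2.le) (Finset.mem_univ i)).trans hsum
  calc (k : ℝ) * δ = ∑ _i : Fin k, δ := by simp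
    _ ≤ ∑ i, v i := Finset.sum_le_sum fun i _ => hle _ (hv i).1 (hv i).2 (hvle i)
    _ ≤ lam := hsum

end IsDiscreteSubmonoid

def IsEnergySplit (G : Set ℝ) (lam : ℝ) (k : ℕ) (μ ν : ℝ) (v : Fin k → ℝ) : Prop :=
  μ ∈ G ∧ ν ∈ G ∧ (∀ i, v i ∈ G ∧ 0 < v i) ∧ μ + ν + ∑ i, v i = lam

namespace IsEnergySplit

variable {G : Set ℝ} {lam μ ν : ℝ} {k : ℕ} {v : Fin k → ℝ}

lemma sum_nonneg (h : IsEnergySplit G lam k μ ν v) : 0 ≤ ∑ i, v i :=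
  Finset.sum_nonneg fun i _ => (h.2.2.1 i).2.le

lemma left_le (hG : IsDiscreteSubmonoid G) (h : IsEnergySplit G lam k μ ν v) : μ ≤ lam := by
  linarith [hG.nonneg ν h.2.1, h.sum_nonneg, h.2.2.2]

lemma middle_le (hG : IsDiscreteSubmonoid G) (h : IsEnergySplit G lam k μ ν v) : ν ≤ lam := by
  linarith [hG.nonneg μ h.1, h.sum_nonneg, h.2.2.2]

lemma sum_le (hG : IsDiscreteSubmonoid G) (h : IsEnergySplit G lam k μ ν v) :
    ∑ i, v i ≤ lam := by
  linarith [hG.nonneg μ h.1, hG.nonneg ν h.2.1, h.2.2.2]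

lemma lt_of_ne (hG : IsDiscreteSubmonoid G) (h : IsEnergySplit G lam k μ ν v)
    (hne : ¬(k = 1 ∧ μ = 0 ∧ ν = 0)) (i : Fin k) : v i < lam := by
  obtain ⟨hμ, hν, hv, hsum⟩ := h
  have hμ₀ := hG.nonneg μ hμ
  have hν₀ := hG.nonneg ν hν
  have hrest₀ : 0 ≤ ∑ j ∈ Finset.univ.erase i, v j := Finset.sum_nonneg fun j _ => (hv j).2.le
  have hrest : 0 < μ + ν ∨ 0 < ∑ j ∈ Finset.univ.erase i, v j := by
    by_cases hk : k = 1
    · left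
      by_contra hle
      exact hne ⟨hk, by linarith, by linarith⟩
    · right
      obtain ⟨j, hji⟩ := Fintype.exists_ne_of_one_lt_card (by simp; have := i.pos; omega) i
      exact Finset.sum_pos (fun j _ => (hv j).2) ⟨j, Finset.mem_erase.2 ⟨hji, Finset.mem_univ j⟩⟩
  have := Finset.add_sum_erase Finset.univ v (Finset.mem_univ i)
  rcases hrest with hrest | hrest <;> linarith

lemma eq_const {v : Fin 1 → ℝ} (h : IsEnergySplit G lam 1 0 0 v) : v = fun _ => lam := by
  funext i
  have hsum := h.2.2.2
  rw [Fin.sum_univ_one, zero_add, zero_add] at hsum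
  rwa [Subsingleton.elim i 0]

lemma const (hG : IsDiscreteSubmonoid G) (hlam : lam ∈ G) (hpos : 0 < lam) :
    IsEnergySplit G lam 1 0 0 fun _ => lam :=
  ⟨hG.zero_mem, hG.zero_mem, fun _ => ⟨hlam, hpos⟩, by simp⟩

end IsEnergySplit

section dbOneTerm

variable {C D : Type*} [AddCommGroup C] [AddCommGroup D] {G : Set ℝ}
  {n : ℕ → ℝ → D → (ℕ → C) → D} {one : ℝ → D} {lam : ℝ}

variable (G n one) in
noncomputable def dbOneTerm (c : ℝ → C) (lam : ℝ) (k : ℕ) (μ ν : ℝ) (v : Fin k → ℝ) : D :=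
  ∑ᶠ (_ : IsEnergySplit G lam k μ ν v), n k μ (one ν) (bVec c v)

lemma killsOne_iff {c : ℝ → C} : KillsOne G n one c ↔
    ∀ lam ∈ G, ∑ᶠ (k : ℕ) (μ : ℝ) (ν : ℝ) (v : Fin k → ℝ), dbOneTerm G n one c lam k μ ν v = 0 :=
  Iff.rfl

lemma dbOneTerm_of_isEnergySplit {c : ℝ → C} {k : ℕ} {μ ν : ℝ} {v : Fin k → ℝ}
    (h : IsEnergySplit G lam k μ ν v) :
    dbOneTerm G n one c lam k μ ν v = n k μ (one ν) (bVec c v) := by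
  classical rw [dbOneTerm, finsum_eq_if, if_pos h]

lemma isEnergySplit_of_dbOneTerm_ne_zero {c : ℝ → C} {k : ℕ} {μ ν : ℝ} {v : Fin k → ℝ}
    (h : dbOneTerm G n one c lam k μ ν v ≠ 0) : IsEnergySplit G lam k μ ν v := by
  classical
  by_contra hs
  rw [dbOneTerm, finsum_eq_if, if_neg hs] at h
  exact h rfl

lemma dbOneTerm_congr (hG : IsDiscreteSubmonoid G) {b b' : ℝ → C}
    (hagree : ∀ x ∈ G, 0 < x → x < lam → b x = b' x) {k : ℕ} {μ ν : ℝ} {v : Fin k → ℝ}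
    (hne : ¬(k = 1 ∧ μ = 0 ∧ ν = 0)) :
    dbOneTerm G n one b lam k μ ν v = dbOneTerm G n one b' lam k μ ν v := by
  by_cases h : IsEnergySplit G lam k μ ν v
  · have hbv : bVec b v = bVec b' v := funext fun t => by
      unfold bVec
      split_ifs
      · exact hagree _ (h.2.2.1 _).1 (h.2.2.1 _).2 (h.lt_of_ne hG hne _)
      · rfl
    rw [dbOneTerm_of_isEnergySplit h, dbOneTerm_of_isEnergySplit h, hbv]
  · have hzero : ∀ c : ℝ → C, dbOneTerm G n one c lam k μ ν v = 0 := fun c => by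
      by_contra hc
      exact h (isEnergySplit_of_dbOneTerm_ne_zero hc)
    rw [hzero, hzero]

lemma finsum_dbOneTerm_one_zero_zero (hG : IsDiscreteSubmonoid G) (hlam : lam ∈ G)
    (hpos : 0 < lam) (c : ℝ → C) :
    ∑ᶠ v, dbOneTerm G n one c lam 1 0 0 v = n 1 0 (one 0) (bVec c fun _ : Fin 1 => lam) := by
  rw [finsum_eq_single _ (fun _ => lam) fun v hv => ?_,
    dbOneTerm_of_isEnergySplit (IsEnergySplit.const hG hlam hpos)]
  by_contra hc
  exact hv (isEnergySplit_of_dbOneTerm_ne_zero hc).eq_const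

lemma finite_support_finsum_dbOneTerm (hG : IsDiscreteSubmonoid G) (c : ℝ → C) :
    (support fun k =>
      ∑ᶠ (μ : ℝ) (ν : ℝ) (v : Fin k → ℝ), dbOneTerm G n one c lam k μ ν v).Finite := by
  obtain ⟨N, hN⟩ := hG.exists_card_le lam
  refine (Set.finite_Iic N).subset fun k hk => ?_
  obtain ⟨μ, hμ⟩ := exists_ne_zero_of_finsum_ne_zero hk
  obtain ⟨ν, hν⟩ := exists_ne_zero_of_finsum_ne_zero hμ
  obtain ⟨v, hv⟩ := exists_ne_zero_of_finsum_ne_zero hν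
  have h := isEnergySplit_of_dbOneTerm_ne_zero hv
  exact hN k v h.2.2.1 (h.sum_le hG)

lemma finite_support_finsum_dbOneTerm_left (hG : IsDiscreteSubmonoid G) (c : ℝ → C) (k : ℕ) :
    (support fun μ => ∑ᶠ (ν : ℝ) (v : Fin k → ℝ), dbOneTerm G n one c lam k μ ν v).Finite := by
  refine (hG.finite_le lam).subset fun μ hμ => ?_
  obtain ⟨ν, hν⟩ := exists_ne_zero_of_finsum_ne_zero hμ
  obtain ⟨v, hv⟩ := exists_ne_zero_of_finsum_ne_zero hν
  have h := isEnergySplit_of_dbOneTerm_ne_zero hv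
  exact ⟨h.1, h.left_le hG⟩

lemma finite_support_finsum_dbOneTerm_middle (hG : IsDiscreteSubmonoid G) (c : ℝ → C) (k : ℕ)
    (μ : ℝ) : (support fun ν => ∑ᶠ v : Fin k → ℝ, dbOneTerm G n one c lam k μ ν v).Finite := by
  refine (hG.finite_le lam).subset fun ν hν => ?_
  obtain ⟨v, hv⟩ := exists_ne_zero_of_finsum_ne_zero hν
  have h := isEnergySplit_of_dbOneTerm_ne_zero hv
  exact ⟨h.2.1, h.middle_le hG⟩

lemma finsum_dbOneTerm_sub_finsum_dbOneTerm (hG : IsDiscreteSubmonoid G) (hlam : lam ∈ G)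
    (hpos : 0 < lam) {b b' : ℝ → C} (hagree : ∀ x ∈ G, 0 < x → x < lam → b x = b' x) :
    (∑ᶠ (k : ℕ) (μ : ℝ) (ν : ℝ) (v : Fin k → ℝ), dbOneTerm G n one b lam k μ ν v) -
        ∑ᶠ (k : ℕ) (μ : ℝ) (ν : ℝ) (v : Fin k → ℝ), dbOneTerm G n one b' lam k μ ν v =
      n 1 0 (one 0) (bVec b fun _ : Fin 1 => lam) -
        n 1 0 (one 0) (bVec b' fun _ : Fin 1 => lam) := by
  rw [finsum_sub_finsum_of_forall_ne 1 (finite_support_finsum_dbOneTerm hG b) fun k hk =>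
      finsum_congr fun _ => finsum_congr fun _ => finsum_congr fun _ =>
        dbOneTerm_congr hG hagree fun h => hk h.1,
    finsum_sub_finsum_of_forall_ne 0 (finite_support_finsum_dbOneTerm_left hG b 1) fun μ hμ =>
      finsum_congr fun _ => finsum_congr fun _ => dbOneTerm_congr hG hagree fun h => hμ h.2.1,
    finsum_sub_finsum_of_forall_ne 0 (finite_support_finsum_dbOneTerm_middle hG b 1 0) fun ν hν =>
      finsum_congr fun _ => dbOneTerm_congr hG hagree fun h => hν h.2.2,
    finsum_dbOneTerm_one_zero_zero hG hlam hpos, finsum_dbOneTerm_one_zero_zero hG hlam hpos]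

end dbOneTerm

theorem eq_of_killsOne_of_forall_lt {G : Set ℝ} (hG : IsDiscreteSubmonoid G)
    {C D : Type*} [AddCommGroup C] [AddCommGroup D]
    {n : ℕ → ℝ → D → (ℕ → C) → D} {one : ℝ → D} (hn : ModOpsMultilinear n)
    (hone : IsCyclicElement n one) {b b' : ℝ → C} (hb : KillsOne G n one b)
    (hb' : KillsOne G n one b') {lam : ℝ} (hlam : lam ∈ G) (hpos : 0 < lam)
    (hagree : ∀ x ∈ G, 0 < x → x < lam → b x = b' x) :
    b lam = b' lam := by
  have hlead : ∀ c : ℝ → C,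
      n 1 0 (one 0) (bVec c fun _ : Fin 1 => lam) = n 1 0 (one 0) fun _ => c lam :=
    fun c => hn.1 _ _ _ _ _ fun i hi => by simp [bVec, hi]
  have h := finsum_dbOneTerm_sub_finsum_dbOneTerm hG hlam hpos hagree (n := n) (one := one)
  rw [killsOne_iff.1 hb lam hlam, killsOne_iff.1 hb' lam hlam, sub_self, eq_comm, sub_eq_zero,
    hlead, hlead] at h
  exact hone.1.injective h

theorem fukaya_prop_3_5_uniqueness_general (G : Set ℝ) (hG : IsDiscreteSubmonoid G)
    {C D : Type*} [AddCommGroup C] [Module (ZMod 2) C] [AddCommGroup D] [Module (ZMod 2) D]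
    (m : ℕ → ℝ → (ℕ → C) → C) (n : ℕ → ℝ → D → (ℕ → C) → D) (one : ℝ → D)
    (hn : IsGappedAInfModule G m n)
    (hone : IsCyclicElement n one)
    (b b' : ℝ → C) (hb : KillsOne G n one b) (hb' : KillsOne G n one b') :
    ∀ lam ∈ G, 0 < lam → b lam = b' lam :=
  hG.induction fun _ hlam ih hpos =>
    eq_of_killsOne_of_forall_lt hG hn.1 hone hb hb' hlam hpos fun y hy hypos hlt =>
      ih y hy hlt hypos

/-- **Uniqueness half of Proposition 3.5.** If `b` and `b'` are `G`-gapped elements of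
`C ⊗ Λ₊` with `d^b(𝟏) = 0` and `d^{b'}(𝟏) = 0`, then `b_λ = b'_λ` for every positive
`λ ∈ G`. -/
theorem fukaya_prop_3_5_uniqueness (G : Set ℝ) (hG : IsDiscreteSubmonoid G)
    {C D : Type*} [AddCommGroup C] [Module (ZMod 2) C] [AddCommGroup D] [Module (ZMod 2) D]
    (m : ℕ → ℝ → (ℕ → C) → C) (n : ℕ → ℝ → D → (ℕ → C) → D) (one : ℝ → D)
    (hm : IsGappedAInfAlgebra G m) (hn : IsGappedAInfModule G m n)
    (hone : IsCyclicElement n one)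
    (b b' : ℝ → C) (hb : KillsOne G n one b) (hb' : KillsOne G n one b') :
    ∀ lam ∈ G, 0 < lam → b lam = b' lam :=
  fukaya_prop_3_5_uniqueness_general G hG m n one hn hone b b' hb hb'
end

section
/- (Maurer–Cartan half of Proposition 3.5.) Let G be a discrete submonoid of ℝ≥0, let (C̄, {m_{k,λ}}) be a G-gapped filtered A∞-algebra over ℤ/2 in coefficientwise form, let (D̄, {n_{k,λ}}) be a G-gapped right filtered A∞-module over it, and let 𝟏 = (𝟏_λ)_{λ∈G} be a G-gapped cyclic element of D. If b = (b_λ) is a G-gapped element of C ⊗ Λ₊ satisfying d^b(𝟏) = 0, then b satisfies the Maurer–Cartan equation: for every positive λ ∈ G, Σ m_{k,μ}(b_{λ₁}, …, b_{λ_k}) = 0, the (finite) sum being over all k ≥ 0, all μ ∈ G and all positive λ₁, …, λ_k ∈ G with μ + λ₁ + ⋯ + λ_k = λ. -/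
open scoped BigOperators

namespace MC35

/-- Weight of the first `k` entries. -/
def W (k : ℕ) (v : ℕ → ℝ) : ℝ := ∑ i ∈ Finset.range k, v i

/-- Padded positive `G`-tuple of length `k`. -/
def Tup (G : Set ℝ) (k : ℕ) (v : ℕ → ℝ) : Prop :=
  (∀ i < k, v i ∈ G ∧ 0 < v i) ∧ ∀ i, k ≤ i → v i = 0

def bv {C : Type*} [Zero C] (b : ℝ → C) (k : ℕ) (v : ℕ → ℝ) : ℕ → C :=
  fun t => if t < k then b (v t) else 0

def padF {k : ℕ} (v : Fin k → ℝ) : ℕ → ℝ := fun t => if h : t < k then v ⟨t, h⟩ else 0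

section Basic

variable {G : Set ℝ}

lemma W_congr {k : ℕ} {v u : ℕ → ℝ} (h : ∀ i < k, v i = u i) : W k v = W k u :=
  Finset.sum_congr rfl fun i hi => h i (Finset.mem_range.mp hi)

lemma W_split (v : ℕ → ℝ) {ℓ k : ℕ} (h : ℓ ≤ k) :
    W k v = W ℓ v + W (k - ℓ) (fun t => v (ℓ + t)) := by
  have h2 : W k v = ∑ x ∈ Finset.range (ℓ + (k - ℓ)), v x := by
    rw [W, show ℓ + (k - ℓ) = k from by omega]
  rw [h2, Finset.sum_range_add]; rfl

lemma W_nonneg (hG : IsDiscreteSubmonoid G) {k : ℕ} {v : ℕ → ℝ}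
    (h : ∀ i < k, v i ∈ G ∧ 0 < v i) : 0 ≤ W k v :=
  Finset.sum_nonneg fun i hi => (h i (Finset.mem_range.mp hi)).2.le

lemma W_mem (hG : IsDiscreteSubmonoid G) {k : ℕ} {v : ℕ → ℝ}
    (h : ∀ i < k, v i ∈ G) : W k v ∈ G := by
  induction k with
  | zero => simpa [W] using hG.zero_mem
  | succ k ih =>
      rw [W, Finset.sum_range_succ]
      exact hG.add_mem _ (ih fun i hi => h i (by omega)) _ (h k (by omega))

lemma entry_le_W {k : ℕ} {v : ℕ → ℝ} (h : ∀ i < k, 0 ≤ v i) {i : ℕ} (hi : i < k) :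
    v i ≤ W k v :=
  Finset.single_le_sum (fun j hj => h j (Finset.mem_range.mp hj)) (Finset.mem_range.mpr hi)

lemma W_eq_zero_iff {k : ℕ} {v : ℕ → ℝ} (h : Tup G k v) (hW : W k v = 0) : k = 0 := by
  by_contra hk
  have h0 : 0 < v 0 := (h.1 0 (by omega)).2
  have h2 := entry_le_W (k := k) (v := v) (i := 0) (fun i hi => (h.1 i hi).2.le) (by omega)
  linarith

lemma Tup_zero {v : ℕ → ℝ} (h : Tup G 0 v) : v = fun _ => 0 :=
  funext fun i => h.2 i (Nat.zero_le i)

lemma tup_zero_fun : Tup G 0 (fun _ => 0) := ⟨fun i hi => by omega, fun _ _ => rfl⟩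

lemma W_padF {k : ℕ} (v : Fin k → ℝ) : W k (padF v) = ∑ i, v i := by
  rw [W, ← Fin.sum_univ_eq_sum_range]
  exact Finset.sum_congr rfl fun i _ => by simp [padF, i.isLt]

lemma sum_restrict {k : ℕ} (v : ℕ → ℝ) : (∑ i : Fin k, v i) = W k v := by
  rw [W, ← Fin.sum_univ_eq_sum_range]

lemma padF_restrict {k : ℕ} {v : ℕ → ℝ} (h : ∀ i, k ≤ i → v i = 0) :
    padF (fun i : Fin k => v i) = v := by
  funext t
  by_cases ht : t < k
  · simp [padF, ht]
  · simp only [padF, dif_neg ht]; exact (h t (by omega)).symm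

lemma restrict_padF {k : ℕ} (v : Fin k → ℝ) : (fun i : Fin k => padF v i) = v := by
  funext i; simp [padF, i.isLt]

lemma Tup_padF {k : ℕ} {v : Fin k → ℝ} (h : ∀ i, v i ∈ G ∧ 0 < v i) : Tup G k (padF v) := by
  constructor
  · intro i hi; simpa [padF, hi] using h ⟨i, hi⟩
  · intro i hi; rw [padF]; exact dif_neg (by omega)

end Basic

section Finiteness

variable {G : Set ℝ}

/-- Core finiteness: padded positive `G`-tuples of weight at most `c` form a finite set. -/
lemma tupLE_finite (hG : IsDiscreteSubmonoid G) (c : ℝ) : {p : ℕ × (ℕ → ℝ) | Tup G p.1 p.2 ∧ W p.1 p.2 ≤ c}.Finite := by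
  classical
  set T : Set ℝ := {x | x ∈ G ∧ 0 < x ∧ x ≤ c} with hT
  have hTfin : T.Finite := (hG.finite_le c).subset (by intro x hx; exact ⟨hx.1, hx.2.2⟩)
  have hmemT : ∀ p : ℕ × (ℕ → ℝ), Tup G p.1 p.2 → W p.1 p.2 ≤ c →
      ∀ i < p.1, p.2 i ∈ T := by
    intro p hp hW i hi
    refine ⟨(hp.1 i hi).1, (hp.1 i hi).2, ?_⟩
    exact le_trans (entry_le_W (fun j hj => (hp.1 j hj).2.le) hi) hW
  -- find a global bound K on k
  obtain ⟨K, hK⟩ : ∃ K : ℕ, ∀ p : ℕ × (ℕ → ℝ), Tup G p.1 p.2 → W p.1 p.2 ≤ c → p.1 ≤ K := by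
    by_cases hTe : T.Nonempty
    · set δ := hTfin.toFinset.min' (by simpa using hTe) with hδ
      have hδT : δ ∈ T := by
        have := hTfin.toFinset.min'_mem (by simpa using hTe)
        simpa using this
      have hδpos : 0 < δ := hδT.2.1
      have hδle : ∀ x ∈ T, δ ≤ x := fun x hx =>
        hTfin.toFinset.min'_le x (by simpa using hx)
      refine ⟨Nat.floor (c / δ), fun p hp hW => ?_⟩
      have hge : (p.1 : ℝ) * δ ≤ W p.1 p.2 := by
        have := Finset.card_nsmul_le_sum (Finset.range p.1) p.2 δ
          (fun i hi => hδle _ (hmemT p hp hW i (Finset.mem_range.mp hi)))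
        simpa [W, nsmul_eq_mul, mul_comm] using this
      have : (p.1 : ℝ) ≤ c / δ := by
        rw [le_div_iff₀ hδpos]; linarith
      exact Nat.le_floor this
    · refine ⟨0, fun p hp hW => ?_⟩
      by_contra hk
      exact hTe ⟨p.2 0, hmemT p hp hW 0 (by omega)⟩
  -- now inject into a finite set
  have hfin2 : (Set.Iic K ×ˢ (Set.pi Set.univ fun _ : Fin K => T ∪ {0})).Finite :=
    (Set.finite_Iic K).prod (Set.Finite.pi fun _ => hTfin.union (Set.finite_singleton 0))
  refine Set.Finite.subset ((hfin2.image
    (fun q : ℕ × (Fin K → ℝ) => (q.1, fun t => if h : t < K then q.2 ⟨t, h⟩ else 0)))) ?_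
  rintro ⟨k, v⟩ ⟨hp, hW⟩
  have hkK : k ≤ K := hK (k, v) hp hW
  refine ⟨(k, fun i : Fin K => v i), ⟨by simpa using hkK, ?_⟩, ?_⟩
  · intro i _
    by_cases hik : (i : ℕ) < k
    · exact Or.inl (hmemT (k, v) hp hW i hik)
    · exact Or.inr (hp.2 i (by omega))
  · simp only [Prod.mk.injEq, true_and]
    funext t
    by_cases ht : t < K
    · simp [ht]
    · simp only [dif_neg ht]
      exact (hp.2 t (by omega)).symm

lemma kBound (hG : IsDiscreteSubmonoid G) (c : ℝ) : ∃ K : ℕ, ∀ (k : ℕ) (v : ℕ → ℝ), Tup G k v → W k v ≤ c → k ≤ K := by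
  have h := ((tupLE_finite hG c).image Prod.fst).bddAbove
  obtain ⟨K, hK⟩ := h
  exact ⟨K, fun k v h1 h2 => hK ⟨(k, v), ⟨h1, h2⟩, rfl⟩⟩

lemma kBoundF (hG : IsDiscreteSubmonoid G) (c : ℝ) : ∃ K : ℕ, ∀ (k : ℕ) (v : Fin k → ℝ),
    (∀ i, v i ∈ G ∧ 0 < v i) → (∑ i, v i) ≤ c → k ≤ K := by
  obtain ⟨K, hK⟩ := kBound hG c
  refine ⟨K, fun k v hv hs => hK k (padF v) (Tup_padF hv) ?_⟩
  rw [W_padF]; exact hs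

lemma vfin_finite (hG : IsDiscreteSubmonoid G) (c : ℝ) (k : ℕ) :
    {v : Fin k → ℝ | (∀ i, v i ∈ G ∧ 0 < v i) ∧ (∑ i, v i) ≤ c}.Finite := by
  have hGc : {x | x ∈ G ∧ x ≤ c}.Finite := hG.finite_le c
  refine Set.Finite.subset (Set.Finite.pi fun _ : Fin k => hGc) ?_
  rintro v ⟨h1, h2⟩ 
  intro i _
  refine ⟨(h1 i).1, ?_⟩
  have : v i ≤ ∑ j, v j := Finset.single_le_sum (fun j _ => (h1 j).2.le) (Finset.mem_univ i)
  linarith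

/-- Index set for the Maurer–Cartan sum at level `ρ`: `(k, μ, v)`. -/
def ESet (G : Set ℝ) (ρ : ℝ) : Set (ℕ × ℝ × (ℕ → ℝ)) :=
  {p | p.2.1 ∈ G ∧ Tup G p.1 p.2.2 ∧ p.2.1 + W p.1 p.2.2 = ρ}

/-- Index set for the `d^b(𝟏)` sum at level `ρ`: `(k, μ, ν, v)`. -/
def KSet (G : Set ℝ) (ρ : ℝ) : Set (ℕ × ℝ × ℝ × (ℕ → ℝ)) :=
  {p | p.2.1 ∈ G ∧ p.2.2.1 ∈ G ∧ Tup G p.1 p.2.2.2 ∧ p.2.1 + p.2.2.1 + W p.1 p.2.2.2 = ρ}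

/-- Index set for the final regrouped sum: `(k', j, μ, σ, ρ, w)`. -/
def ASet (G : Set ℝ) (lam : ℝ) : Set (ℕ × ℕ × ℝ × ℝ × ℝ × (ℕ → ℝ)) :=
  {p | p.2.1 ≤ p.1 ∧ p.2.2.1 ∈ G ∧ p.2.2.2.1 ∈ G ∧ p.2.2.2.2.1 ∈ G ∧
    Tup G p.1 p.2.2.2.2.2 ∧ p.2.2.1 + p.2.2.2.1 + p.2.2.2.2.1 + W p.1 p.2.2.2.2.2 = lam}

lemma ESet_finite (hG : IsDiscreteSubmonoid G) (ρ : ℝ) : (ESet G ρ).Finite := by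
  have h1 := hG.finite_le ρ
  have h2 := tupLE_finite hG ρ
  refine Set.Finite.subset ((h1.prod h2).image
    (fun q : ℝ × (ℕ × (ℕ → ℝ)) => (q.2.1, q.1, q.2.2))) ?_
  rintro ⟨k, μ, v⟩ ⟨hμ, hT, hsum⟩
  have hWn := W_nonneg hG hT.1
  have hμn := hG.nonneg μ hμ
  exact ⟨(μ, (k, v)), ⟨⟨hμ, by linarith⟩, hT, by linarith⟩, rfl⟩

lemma KSetLE_finite (hG : IsDiscreteSubmonoid G) (c : ℝ) : {p : ℕ × ℝ × ℝ × (ℕ → ℝ) | p.2.1 ∈ G ∧ p.2.2.1 ∈ G ∧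
    Tup G p.1 p.2.2.2 ∧ p.2.1 + p.2.2.1 + W p.1 p.2.2.2 ≤ c}.Finite := by
  have h1 := hG.finite_le c
  have h2 := tupLE_finite hG c
  refine Set.Finite.subset (((h1.prod h1).prod h2).image
    (fun q : (ℝ × ℝ) × (ℕ × (ℕ → ℝ)) => (q.2.1, q.1.1, q.1.2, q.2.2))) ?_
  rintro ⟨k, μ, ν, v⟩ ⟨hμ, hν, hT, hsum⟩
  have hWn := W_nonneg hG hT.1
  have hμn := hG.nonneg μ hμ
  have hνn := hG.nonneg ν hν
  exact ⟨((μ, ν), (k, v)), ⟨⟨⟨hμ, by linarith⟩, ⟨hν, by linarith⟩⟩, hT, by linarith⟩, rfl⟩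

lemma ESetLE_finite (hG : IsDiscreteSubmonoid G) (c : ℝ) : {p : ℕ × ℝ × (ℕ → ℝ) | p.2.1 ∈ G ∧
    Tup G p.1 p.2.2 ∧ p.2.1 + W p.1 p.2.2 ≤ c}.Finite := by
  have h1 := hG.finite_le c
  have h2 := tupLE_finite hG c
  refine Set.Finite.subset ((h1.prod h2).image
    (fun q : ℝ × (ℕ × (ℕ → ℝ)) => (q.2.1, q.1, q.2.2))) ?_
  rintro ⟨k, μ, v⟩ ⟨hμ, hT, hsum⟩
  have hWn := W_nonneg hG hT.1
  have hμn := hG.nonneg μ hμ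
  exact ⟨(μ, (k, v)), ⟨⟨hμ, by linarith⟩, hT, by linarith⟩, rfl⟩

lemma KSet_finite (hG : IsDiscreteSubmonoid G) (ρ : ℝ) : (KSet G ρ).Finite :=
  (KSetLE_finite hG ρ).subset fun p hp => ⟨hp.1, hp.2.1, hp.2.2.1, le_of_eq hp.2.2.2⟩

lemma ASet_finite (hG : IsDiscreteSubmonoid G) (lam : ℝ) : (ASet G lam).Finite := by
  have h1 := hG.finite_le lam
  have h2 := tupLE_finite hG lam
  have hQ : {q : (ℕ × (ℕ → ℝ)) × ℕ | (Tup G q.1.1 q.1.2 ∧ W q.1.1 q.1.2 ≤ lam) ∧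
      q.2 ≤ q.1.1}.Finite := by
    refine Set.Finite.subset (h2.biUnion (fun p _ => (Set.finite_Iic p.1).image
      (fun j => (p, j)))) ?_
    rintro ⟨p, j⟩ ⟨hp, hj⟩
    exact Set.mem_biUnion hp ⟨j, hj, rfl⟩
  refine Set.Finite.subset ((hQ.prod ((h1.prod h1).prod h1)).image
    (fun q : ((ℕ × (ℕ → ℝ)) × ℕ) × ((ℝ × ℝ) × ℝ) =>
      (q.1.1.1, q.1.2, q.2.1.1, q.2.1.2, q.2.2, q.1.1.2))) ?_
  rintro ⟨k', j, μ, σ, ρ, w⟩ ⟨hj, hμ, hσ, hρ, hT, hsum⟩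
  have hWn := W_nonneg hG hT.1
  have hμn := hG.nonneg μ hμ
  have hσn := hG.nonneg σ hσ
  have hρn := hG.nonneg ρ hρ
  exact ⟨(((k', w), j), ((μ, σ), ρ)),
    ⟨⟨⟨hT, by linarith⟩, hj⟩, ⟨⟨hμ, by linarith⟩, ⟨hσ, by linarith⟩⟩, ⟨hρ, by linarith⟩⟩, rfl⟩

end Finiteness

end MC35
namespace MC35

section FinsumConv

variable {α β γ δ M : Type*} [AddCommMonoid M]

lemma finsum_cond_eq_sum (p : α → Prop) [DecidablePred p] (f : α → M) (s : Finset α)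
    (h : ∀ x, p x → x ∈ s) :
    (∑ᶠ (x) (_ : p x), f x) = ∑ x ∈ s, if p x then f x else 0 := by
  classical
  have h1 : ∀ x : α, (∑ᶠ _ : p x, f x) = if p x then f x else 0 := fun x => finsum_eq_if
  simp only [h1]
  refine finsum_eq_finset_sum_of_support_subset _ ?_
  intro x hx
  simp only [Function.mem_support, ne_eq, ite_eq_right_iff, not_forall] at hx
  exact h x hx.choose

lemma finsum2_cond (p : α → β → Prop) [∀ x y, Decidable (p x y)] (f : α → β → M) (s : Finset α) (t : Finset β)
    (h : ∀ x y, p x y → x ∈ s ∧ y ∈ t) :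
    (∑ᶠ (x) (y) (_ : p x y), f x y) =
      ∑ r ∈ s ×ˢ t, if p r.1 r.2 then f r.1 r.2 else 0 := by
  classical
  have h1 : ∀ x, (∑ᶠ (y) (_ : p x y), f x y) = ∑ y ∈ t, if p x y then f x y else 0 :=
    fun x => finsum_cond_eq_sum _ _ _ (fun y hy => (h x y hy).2)
  simp only [h1]
  rw [Finset.sum_product]
  refine finsum_eq_finset_sum_of_support_subset _ ?_
  intro x hx
  simp only [Function.mem_support, ne_eq] at hx
  by_contra hxs
  refine hx (Finset.sum_eq_zero fun y _ => if_neg fun hp => hxs (h x y hp).1)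

lemma finsum3_cond (p : α → β → γ → Prop) [∀ x y z, Decidable (p x y z)] (f : α → β → γ → M)
    (s : Finset α) (t : Finset β) (u : Finset γ)
    (h : ∀ x y z, p x y z → x ∈ s ∧ y ∈ t ∧ z ∈ u) :
    (∑ᶠ (x) (y) (z) (_ : p x y z), f x y z) =
      ∑ r ∈ s ×ˢ t ×ˢ u, if p r.1 r.2.1 r.2.2 then f r.1 r.2.1 r.2.2 else 0 := by
  classical
  have h1 : ∀ x, (∑ᶠ (y) (z) (_ : p x y z), f x y z) =
      ∑ r ∈ t ×ˢ u, if p x r.1 r.2 then f x r.1 r.2 else 0 :=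
    fun x => finsum2_cond _ _ _ _ (fun y z hp => ⟨(h x y z hp).2.1, (h x y z hp).2.2⟩)
  simp only [h1]
  rw [Finset.sum_product]
  refine finsum_eq_finset_sum_of_support_subset _ ?_
  intro x hx
  simp only [Function.mem_support, ne_eq] at hx
  by_contra hxs
  exact hx (Finset.sum_eq_zero fun r _ => if_neg fun hp => hxs (h x r.1 r.2 hp).1)

lemma finsum4_cond (p : α → β → γ → δ → Prop) [∀ x y z r, Decidable (p x y z r)] (f : α → β → γ → δ → M)
    (s : Finset α) (t : Finset β) (u : Finset γ) (w : Finset δ)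
    (h : ∀ x y z r, p x y z r → x ∈ s ∧ y ∈ t ∧ z ∈ u ∧ r ∈ w) :
    (∑ᶠ (x) (y) (z) (r) (_ : p x y z r), f x y z r) =
      ∑ r ∈ s ×ˢ t ×ˢ u ×ˢ w,
        if p r.1 r.2.1 r.2.2.1 r.2.2.2 then f r.1 r.2.1 r.2.2.1 r.2.2.2 else 0 := by
  classical
  have h1 : ∀ x, (∑ᶠ (y) (z) (r) (_ : p x y z r), f x y z r) =
      ∑ r ∈ t ×ˢ u ×ˢ w, if p x r.1 r.2.1 r.2.2 then f x r.1 r.2.1 r.2.2 else 0 :=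
    fun x => finsum3_cond _ _ _ _ _
      (fun y z r hp => ⟨(h x y z r hp).2.1, (h x y z r hp).2.2.1, (h x y z r hp).2.2.2⟩)
  simp only [h1]
  rw [Finset.sum_product]
  refine finsum_eq_finset_sum_of_support_subset _ ?_
  intro x hx
  simp only [Function.mem_support, ne_eq] at hx
  by_contra hxs
  exact hx (Finset.sum_eq_zero fun r _ => if_neg fun hp => hxs (h x r.1 r.2.1 r.2.2 hp).1)

end FinsumConv

end MC35
namespace MC35

open scoped Classical

section Conv

variable {G : Set ℝ} {C D : Type*} [AddCommGroup C] [AddCommGroup D]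

lemma bVec_padF (b : ℝ → C) {k : ℕ} (v : Fin k → ℝ) : bVec b v = bv b k (padF v) := by
  funext t
  by_cases ht : t < k
  · simp [bVec, bv, padF, ht]
  · simp [bVec, bv, padF, ht]

lemma bVec_restrict (b : ℝ → C) {k : ℕ} (v : ℕ → ℝ) :
    bVec b (fun i : Fin k => v i) = bv b k v := by
  funext t
  by_cases ht : t < k
  · simp [bVec, bv, ht]
  · simp [bVec, bv, ht]

/-- Conversion of the Maurer–Cartan finsum to a `Finset` sum over padded tuples. -/
lemma convE (hG : IsDiscreteSubmonoid G) (b : ℝ → C) (m : ℕ → ℝ → (ℕ → C) → C) (ρ : ℝ) :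
    (∑ᶠ (k : ℕ) (μ : ℝ) (v : Fin k → ℝ)
        (_ : μ ∈ G ∧ (∀ i, v i ∈ G ∧ 0 < v i) ∧ μ + ∑ i, v i = ρ),
      m k μ (bVec b v)) =
    ∑ p ∈ (ESet_finite hG ρ).toFinset, m p.1 p.2.1 (bv b p.1 p.2.2) := by
  obtain ⟨K, hK⟩ := kBoundF hG ρ
  set Gf := (hG.finite_le ρ).toFinset with hGf
  have hGfmem : ∀ x : ℝ, x ∈ G → x ≤ ρ → x ∈ Gf := by
    intro x h1 h2; rw [hGf, Set.Finite.mem_toFinset]; exact ⟨h1, h2⟩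
  have hk : ∀ k : ℕ, (∑ᶠ (μ : ℝ) (v : Fin k → ℝ)
      (_ : μ ∈ G ∧ (∀ i, v i ∈ G ∧ 0 < v i) ∧ μ + ∑ i, v i = ρ), m k μ (bVec b v)) =
      ∑ r ∈ Gf ×ˢ (vfin_finite hG ρ k).toFinset,
        if r.1 ∈ G ∧ (∀ i, r.2 i ∈ G ∧ 0 < r.2 i) ∧ r.1 + ∑ i, r.2 i = ρ
        then m k r.1 (bVec b r.2) else 0 := by
    intro k
    refine finsum2_cond (M := C) _ _ _ _ ?_
    rintro μ v ⟨h1, h2, h3⟩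
    have hs : 0 ≤ ∑ i, v i := Finset.sum_nonneg fun i _ => (h2 i).2.le
    have hμ : 0 ≤ μ := hG.nonneg μ h1
    constructor
    · exact hGfmem μ h1 (by linarith)
    · rw [Set.Finite.mem_toFinset]; exact ⟨h2, by linarith⟩
  simp only [hk]
  rw [finsum_eq_finset_sum_of_support_subset _
    (s := Finset.range (K + 1)) ?hsupp]
  case hsupp =>
    intro k hk2
    simp only [Function.mem_support, ne_eq, Finset.coe_range, Set.mem_Iio] at hk2 ⊢
    by_contra hkK
    refine hk2 (Finset.sum_eq_zero fun r _ => if_neg ?_)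
    rintro ⟨h1, h2, h3⟩
    have hμ : 0 ≤ r.1 := hG.nonneg _ h1
    exact hkK (Nat.lt_succ_of_le (hK k r.2 h2 (by linarith)))
  rw [Finset.sum_sigma']
  rw [← Finset.sum_filter]
  refine Finset.sum_nbij' (fun p => (p.1, p.2.1, padF p.2.2))
    (fun q => ⟨q.1, (q.2.1, fun i : Fin q.1 => q.2.2 i)⟩) ?_ ?_ ?_ ?_ ?_
  · rintro ⟨k, μ, v⟩ hp
    rw [Finset.mem_filter] at hp
    obtain ⟨-, h1, h2, h3⟩ := hp
    rw [Set.Finite.mem_toFinset]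
    exact ⟨h1, Tup_padF h2, by rw [W_padF]; exact h3⟩
  · rintro ⟨k, μ, v⟩ hq
    rw [Set.Finite.mem_toFinset] at hq
    obtain ⟨h1, h2, h3⟩ := hq
    have hpos : ∀ i : Fin k, v i ∈ G ∧ 0 < v i := fun i => h2.1 i i.isLt
    have hsum : (∑ i : Fin k, v i) = W k v := sum_restrict v
    have hWn : 0 ≤ W k v := W_nonneg hG h2.1
    have hμn : 0 ≤ μ := hG.nonneg μ h1
    rw [Finset.mem_filter]
    refine ⟨Finset.mem_sigma.mpr ⟨?_, ?_⟩, h1, hpos, by rw [hsum]; exact h3⟩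
    · rw [Finset.mem_range]
      exact Nat.lt_succ_of_le (hK k _ hpos (by rw [hsum]; linarith))
    · rw [Finset.mem_product]
      refine ⟨hGfmem μ h1 (by linarith), ?_⟩
      rw [Set.Finite.mem_toFinset]
      exact ⟨hpos, by rw [hsum]; linarith⟩
  · rintro ⟨k, μ, v⟩ hp
    simp only [restrict_padF]
  · rintro ⟨k, μ, v⟩ hq
    rw [Set.Finite.mem_toFinset] at hq
    simp only [Prod.mk.injEq, true_and]
    exact padF_restrict hq.2.1.2
  · rintro ⟨k, μ, v⟩ hp
    simp only []
    rw [bVec_padF]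

/-- Conversion of the `d^b(𝟏)` finsum to a `Finset` sum over padded tuples. -/
lemma convK (hG : IsDiscreteSubmonoid G) (b : ℝ → C) (n : ℕ → ℝ → D → (ℕ → C) → D)
    (one : ℝ → D) (ρ : ℝ) :
    (∑ᶠ (k : ℕ) (μ : ℝ) (ν : ℝ) (v : Fin k → ℝ)
        (_ : μ ∈ G ∧ ν ∈ G ∧ (∀ i, v i ∈ G ∧ 0 < v i) ∧ μ + ν + ∑ i, v i = ρ),
      n k μ (one ν) (bVec b v)) =
    ∑ p ∈ (KSet_finite hG ρ).toFinset, n p.1 p.2.1 (one p.2.2.1) (bv b p.1 p.2.2.2) := by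
  obtain ⟨K, hK⟩ := kBoundF hG ρ
  set Gf := (hG.finite_le ρ).toFinset with hGf
  have hGfmem : ∀ x : ℝ, x ∈ G → x ≤ ρ → x ∈ Gf := by
    intro x h1 h2; rw [hGf, Set.Finite.mem_toFinset]; exact ⟨h1, h2⟩
  have hk : ∀ k : ℕ, (∑ᶠ (μ : ℝ) (ν : ℝ) (v : Fin k → ℝ)
      (_ : μ ∈ G ∧ ν ∈ G ∧ (∀ i, v i ∈ G ∧ 0 < v i) ∧ μ + ν + ∑ i, v i = ρ),
        n k μ (one ν) (bVec b v)) =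
      ∑ r ∈ Gf ×ˢ Gf ×ˢ (vfin_finite hG ρ k).toFinset,
        if r.1 ∈ G ∧ r.2.1 ∈ G ∧ (∀ i, r.2.2 i ∈ G ∧ 0 < r.2.2 i) ∧ r.1 + r.2.1 + ∑ i, r.2.2 i = ρ
        then n k r.1 (one r.2.1) (bVec b r.2.2) else 0 := by
    intro k
    refine finsum3_cond (M := D) _ _ _ _ _ ?_
    rintro μ ν v ⟨h1, h1b, h2, h3⟩
    have hs : 0 ≤ ∑ i, v i := Finset.sum_nonneg fun i _ => (h2 i).2.le
    have hμ : 0 ≤ μ := hG.nonneg μ h1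
    have hν : 0 ≤ ν := hG.nonneg ν h1b
    refine ⟨hGfmem μ h1 (by linarith), hGfmem ν h1b (by linarith), ?_⟩
    rw [Set.Finite.mem_toFinset]; exact ⟨h2, by linarith⟩
  simp only [hk]
  rw [finsum_eq_finset_sum_of_support_subset _
    (s := Finset.range (K + 1)) ?hsupp]
  case hsupp =>
    intro k hk2
    simp only [Function.mem_support, ne_eq, Finset.coe_range, Set.mem_Iio] at hk2 ⊢
    by_contra hkK
    refine hk2 (Finset.sum_eq_zero fun r _ => if_neg ?_)
    rintro ⟨h1, h1b, h2, h3⟩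
    have hμ : 0 ≤ r.1 := hG.nonneg _ h1
    have hν : 0 ≤ r.2.1 := hG.nonneg _ h1b
    exact hkK (Nat.lt_succ_of_le (hK k r.2.2 h2 (by linarith)))
  rw [Finset.sum_sigma']
  rw [← Finset.sum_filter]
  refine Finset.sum_nbij' (fun p => (p.1, p.2.1, p.2.2.1, padF p.2.2.2))
    (fun q => ⟨q.1, (q.2.1, q.2.2.1, fun i : Fin q.1 => q.2.2.2 i)⟩) ?_ ?_ ?_ ?_ ?_
  · rintro ⟨k, μ, ν, v⟩ hp
    rw [Finset.mem_filter] at hp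
    obtain ⟨-, h1, h1b, h2, h3⟩ := hp
    rw [Set.Finite.mem_toFinset]
    exact ⟨h1, h1b, Tup_padF h2, by rw [W_padF]; exact h3⟩
  · rintro ⟨k, μ, ν, v⟩ hq
    rw [Set.Finite.mem_toFinset] at hq
    obtain ⟨h1, h1b, h2, h3⟩ := hq
    have hpos : ∀ i : Fin k, v i ∈ G ∧ 0 < v i := fun i => h2.1 i i.isLt
    have hsum : (∑ i : Fin k, v i) = W k v := sum_restrict v
    have hWn : 0 ≤ W k v := W_nonneg hG h2.1
    have hμn : 0 ≤ μ := hG.nonneg μ h1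
    have hνn : 0 ≤ ν := hG.nonneg ν h1b
    rw [Finset.mem_filter]
    refine ⟨Finset.mem_sigma.mpr ⟨?_, ?_⟩, h1, h1b, hpos, by rw [hsum]; exact h3⟩
    · rw [Finset.mem_range]
      exact Nat.lt_succ_of_le (hK k _ hpos (by rw [hsum]; linarith))
    · rw [Finset.mem_product]
      refine ⟨hGfmem μ h1 (by linarith), ?_⟩
      rw [Finset.mem_product]
      refine ⟨hGfmem ν h1b (by linarith), ?_⟩
      rw [Set.Finite.mem_toFinset]
      exact ⟨hpos, by rw [hsum]; linarith⟩
  · rintro ⟨k, μ, ν, v⟩ hp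
    simp only [restrict_padF]
  · rintro ⟨k, μ, ν, v⟩ hq
    rw [Set.Finite.mem_toFinset] at hq
    simp only [Prod.mk.injEq, true_and]
    exact padF_restrict hq.2.2.1.2
  · rintro ⟨k, μ, ν, v⟩ hp
    simp only []
    rw [bVec_padF]

end Conv

end MC35
namespace MC35

open scoped Classical

section Steps

variable {G : Set ℝ} {C D : Type*} [AddCommGroup C] [AddCommGroup D]

lemma pairEq {A B : Type*} {a a' : A} {b b' : B} (h1 : a = a') (h2 : b = b') :
    (a, b) = (a', b') := by subst h1; subst h2; rfl

lemma prodEq4 {A B C' D' : Type*} {a a' : A} {b b' : B} {c c' : C'} {d d' : D'}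
    (h1 : a = a') (h2 : b = b') (h3 : c = c') (h4 : d = d') :
    (a, b, c, d) = (a', b', c', d') := by subst h1; subst h2; subst h3; subst h4; rfl

lemma prodEq3 {A B C' : Type*} {a a' : A} {b b' : B} {c c' : C'}
    (h1 : a = a') (h2 : b = b') (h3 : c = c') :
    (a, b, c) = (a', b', c') := by subst h1; subst h2; subst h3; rfl

lemma prodEq6 {A B C' D' E' F' : Type*} {a a' : A} {b b' : B} {c c' : C'} {d d' : D'}
    {e e' : E'} {f f' : F'}
    (h1 : a = a') (h2 : b = b') (h3 : c = c') (h4 : d = d') (h5 : e = e') (h6 : f = f') :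
    (a, b, c, d, e, f) = (a', b', c', d', e', f') := by
  subst h1; subst h2; subst h3; subst h4; subst h5; subst h6; rfl

/-- `Finset` form of the Maurer–Cartan sum. -/
noncomputable def EFv (hG : IsDiscreteSubmonoid G) (b : ℝ → C) (m : ℕ → ℝ → (ℕ → C) → C)
    (ρ : ℝ) : C :=
  ∑ p ∈ (ESet_finite hG ρ).toFinset, m p.1 p.2.1 (bv b p.1 p.2.2)

/-- `Finset` form of the `d^b(𝟏)` sum. -/
noncomputable def KFv (hG : IsDiscreteSubmonoid G) (b : ℝ → C) (n : ℕ → ℝ → D → (ℕ → C) → D)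
    (one : ℝ → D) (ρ : ℝ) : D :=
  ∑ p ∈ (KSet_finite hG ρ).toFinset, n p.1 p.2.1 (one p.2.2.1) (bv b p.1 p.2.2.2)

lemma step2a (hG : IsDiscreteSubmonoid G) (b : ℝ → C) (n : ℕ → ℝ → D → (ℕ → C) → D)
    (one : ℝ → D) (hnml : ModOpsMultilinear n)
    (hb : ∀ ρ ∈ G, KFv hG b n one ρ = 0) (lam : ℝ) :
    ∑ q ∈ (KSet_finite hG lam).toFinset,
      (∑ᶠ (μ : ℝ) (ν : ℝ) (ℓ : ℕ)
          (_ : μ ∈ G ∧ ν ∈ G ∧ μ + ν = q.2.1 ∧ ℓ ≤ q.1),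
        n (q.1 - ℓ) μ (n ℓ ν (one q.2.2.1) (bv b q.1 q.2.2.2))
          fun t => bv b q.1 q.2.2.2 (ℓ + t)) = 0 := by
  classical
  obtain ⟨KK, hKb⟩ := kBound hG lam
  set Gfl := (hG.finite_le lam).toFinset with hGfl
  have hmem : ∀ q : ℕ × ℝ × ℝ × (ℕ → ℝ), q ∈ (KSet_finite hG lam).toFinset ↔
      (q.2.1 ∈ G ∧ q.2.2.1 ∈ G ∧ Tup G q.1 q.2.2.2 ∧
        q.2.1 + q.2.2.1 + W q.1 q.2.2.2 = lam) := fun q => Set.Finite.mem_toFinset _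
  -- conversion of inner finsums to Finset sums
  have hconv : ∀ q ∈ (KSet_finite hG lam).toFinset,
      (∑ᶠ (μ : ℝ) (ν : ℝ) (ℓ : ℕ)
          (_ : μ ∈ G ∧ ν ∈ G ∧ μ + ν = q.2.1 ∧ ℓ ≤ q.1),
        n (q.1 - ℓ) μ (n ℓ ν (one q.2.2.1) (bv b q.1 q.2.2.2))
          fun t => bv b q.1 q.2.2.2 (ℓ + t)) =
      ∑ r ∈ Gfl ×ˢ Gfl ×ˢ Finset.range (KK + 1),
        if r.1 ∈ G ∧ r.2.1 ∈ G ∧ r.1 + r.2.1 = q.2.1 ∧ r.2.2 ≤ q.1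
        then n (q.1 - r.2.2) r.1 (n r.2.2 r.2.1 (one q.2.2.1) (bv b q.1 q.2.2.2))
          fun t => bv b q.1 q.2.2.2 (r.2.2 + t) else 0 := by
    intro q hq
    obtain ⟨h1, h2, h3, h4⟩ := (hmem q).mp hq
    have hWn := W_nonneg hG h3.1
    have hσ := hG.nonneg _ h2
    have hl1 := hG.nonneg _ h1
    have hkK : q.1 ≤ KK := hKb q.1 _ h3 (by linarith)
    refine finsum3_cond (M := D) _ _ _ _ _ ?_
    rintro μ ν ℓ ⟨g1, g2, g3, g4⟩
    have hμn := hG.nonneg _ g1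
    have hνn := hG.nonneg _ g2
    refine ⟨?_, ?_, Finset.mem_range.mpr (by omega)⟩
    · rw [hGfl, Set.Finite.mem_toFinset]; exact ⟨g1, by linarith⟩
    · rw [hGfl, Set.Finite.mem_toFinset]; exact ⟨g2, by linarith⟩
  rw [Finset.sum_congr rfl hconv]
  rw [← Finset.sum_product']
  rw [← Finset.sum_filter]
  -- the regrouped index set
  have hP1 : {p : (ℕ × ℝ × ℝ × (ℕ → ℝ)) × (ℕ × ℝ × ℝ × (ℕ → ℝ)) |
      p.1 ∈ KSet G lam ∧ p.2 ∈ KSet G p.1.2.2.1}.Finite := by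
    refine Set.Finite.subset ((KSet_finite hG lam).prod (KSetLE_finite hG lam)) ?_
    rintro ⟨o, q'⟩ ⟨ho, hq'⟩
    refine ⟨ho, ?_⟩
    obtain ⟨a1, a2, a3, a4⟩ := ho
    have hWo := W_nonneg hG a3.1
    have hμo := hG.nonneg _ a1
    obtain ⟨c1, c2, c3, c4⟩ := hq'
    exact ⟨c1, c2, c3, by linarith⟩
  have hbij : (∑ p ∈ ((KSet_finite hG lam).toFinset ×ˢ
        (Gfl ×ˢ Gfl ×ˢ Finset.range (KK + 1))).filter
        (fun p => p.2.1 ∈ G ∧ p.2.2.1 ∈ G ∧ p.2.1 + p.2.2.1 = p.1.2.1 ∧ p.2.2.2 ≤ p.1.1),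
        n (p.1.1 - p.2.2.2) p.2.1 (n p.2.2.2 p.2.2.1 (one p.1.2.2.1) (bv b p.1.1 p.1.2.2.2))
          fun t => bv b p.1.1 p.1.2.2.2 (p.2.2.2 + t)) =
      ∑ p ∈ hP1.toFinset,
        n p.1.1 p.1.2.1 (n p.2.1 p.2.2.1 (one p.2.2.2.1) (bv b p.2.1 p.2.2.2.2))
          (bv b p.1.1 p.1.2.2.2) := by
    refine Finset.sum_nbij'
      (i := fun p => ((p.1.1 - p.2.2.2, p.2.1, p.2.2.1 + p.1.2.2.1 + W p.2.2.2 p.1.2.2.2,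
        fun t => p.1.2.2.2 (p.2.2.2 + t)),
        (p.2.2.2, p.2.2.1, p.1.2.2.1, fun t => if t < p.2.2.2 then p.1.2.2.2 t else 0)))
      (j := fun p => ((p.2.1 + p.1.1, p.1.2.1 + p.2.2.1, p.2.2.2.1,
        fun t => if t < p.2.1 then p.2.2.2.2 t else p.1.2.2.2 (t - p.2.1)),
        (p.1.2.1, p.2.2.1, p.2.1)))
      ?_ ?_ ?_ ?_ ?_
    · -- hi
      rintro ⟨⟨k, lam', σ, v⟩, μ, ν, ℓ⟩ hp
      rw [Finset.mem_filter, Finset.mem_product] at hp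
      obtain ⟨⟨hq, -⟩, hcond⟩ := hp
      obtain ⟨g1, g2, g3, g4⟩ : μ ∈ G ∧ ν ∈ G ∧ μ + ν = lam' ∧ ℓ ≤ k := hcond
      obtain ⟨h1, h2, h3, h4⟩ := (hmem _).mp hq
      dsimp only at h1 h2 h3 h4
      rw [Set.Finite.mem_toFinset]
      simp only [Set.mem_setOf_eq]
      have hWs := W_split v g4
      refine ⟨?_, ?_⟩
      · -- o-part ∈ KSet lam
        refine ⟨g1, hG.add_mem _ (hG.add_mem _ g2 _ h2) _
          (W_mem hG fun i hi => (h3.1 i (by omega)).1), ⟨?_, ?_⟩, ?_⟩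
        · intro i hi; exact h3.1 (ℓ + i) (by omega)
        · intro i hi; exact h3.2 (ℓ + i) (by omega)
        · dsimp only; linarith
      · -- q'-part ∈ KSet ρ
        refine ⟨g2, h2, ⟨?_, ?_⟩, ?_⟩
        · intro i hi; dsimp only; rw [if_pos hi]; exact h3.1 i (by omega)
        · intro i hi; dsimp only; rw [if_neg (by omega)]
        · dsimp only
          rw [show W ℓ (fun t => if t < ℓ then v t else 0) = W ℓ v from
            W_congr fun i hi => if_pos hi]
    · -- hj
      rintro ⟨⟨k₁, μ, ρ, w⟩, k₂, ν, σ, u⟩ hp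
      rw [Set.Finite.mem_toFinset] at hp
      obtain ⟨ho, hq'⟩ := hp
      obtain ⟨a1, a2, a3, a4⟩ : μ ∈ G ∧ ρ ∈ G ∧ Tup G k₁ w ∧ μ + ρ + W k₁ w = lam := ho
      obtain ⟨c1, c2, c3, c4⟩ : ν ∈ G ∧ σ ∈ G ∧ Tup G k₂ u ∧ ν + σ + W k₂ u = ρ := hq'
      have hWw := W_nonneg hG a3.1
      have hWu := W_nonneg hG c3.1
      have hμn := hG.nonneg _ a1
      have hρn := hG.nonneg _ a2
      have hνn := hG.nonneg _ c1
      have hσn := hG.nonneg _ c2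
      have hTup : Tup G (k₂ + k₁) (fun t => if t < k₂ then u t else w (t - k₂)) := by
        constructor
        · intro i hi
          dsimp only
          by_cases hik : i < k₂
          · rw [if_pos hik]; exact c3.1 i hik
          · rw [if_neg hik]; exact a3.1 (i - k₂) (by omega)
        · intro i hi
          dsimp only
          rw [if_neg (by omega)]
          exact a3.2 (i - k₂) (by omega)
      have hWsp : W (k₂ + k₁) (fun t => if t < k₂ then u t else w (t - k₂)) =
          W k₂ u + W k₁ w := by
        rw [W_split _ (Nat.le_add_right k₂ k₁)]
        congr 1
        · exact W_congr fun i hi => if_pos hi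
        · rw [show k₂ + k₁ - k₂ = k₁ from by omega]
          exact W_congr fun i hi => by rw [if_neg (by omega)]; congr 1; omega
      have hsum : (μ + ν) + σ + W (k₂ + k₁) (fun t => if t < k₂ then u t else w (t - k₂)) =
          lam := by rw [hWsp]; linarith
      rw [Finset.mem_filter, Finset.mem_product]
      refine ⟨⟨(hmem _).mpr ⟨hG.add_mem _ a1 _ c1, c2, hTup, hsum⟩, ?_⟩, a1, c1, rfl,
        by dsimp only; omega⟩
      rw [Finset.mem_product, Finset.mem_product]
      have hk12 : k₂ + k₁ ≤ KK := hKb _ _ hTup (by rw [hWsp]; linarith)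
      refine ⟨?_, ?_, Finset.mem_range.mpr (by dsimp only; omega)⟩
      · rw [hGfl, Set.Finite.mem_toFinset]; exact ⟨a1, by linarith⟩
      · rw [hGfl, Set.Finite.mem_toFinset]; exact ⟨c1, by linarith⟩
    · -- left inverse
      rintro ⟨⟨k, lam', σ, v⟩, μ, ν, ℓ⟩ hp
      rw [Finset.mem_filter, Finset.mem_product] at hp
      obtain ⟨⟨hq, -⟩, hcond⟩ := hp
      obtain ⟨g1, g2, g3, g4⟩ : μ ∈ G ∧ ν ∈ G ∧ μ + ν = lam' ∧ ℓ ≤ k := hcond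
      dsimp only
      refine pairEq (prodEq4 (by omega) g3 rfl ?_) rfl
      funext t
      by_cases ht : t < ℓ
      · simp only [if_pos ht]
      · simp only [if_neg ht]; congr 1; omega
    · -- right inverse
      rintro ⟨⟨k₁, μ, ρ, w⟩, k₂, ν, σ, u⟩ hp
      rw [Set.Finite.mem_toFinset] at hp
      obtain ⟨ho, hq'⟩ := hp
      obtain ⟨a1, a2, a3, a4⟩ : μ ∈ G ∧ ρ ∈ G ∧ Tup G k₁ w ∧ μ + ρ + W k₁ w = lam := ho
      obtain ⟨c1, c2, c3, c4⟩ : ν ∈ G ∧ σ ∈ G ∧ Tup G k₂ u ∧ ν + σ + W k₂ u = ρ := hq'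
      dsimp only
      refine pairEq (prodEq4 (by omega) rfl ?_ ?_) (prodEq4 rfl rfl rfl ?_)
      · rw [show W k₂ (fun t => if t < k₂ then u t else w (t - k₂)) = W k₂ u from
          W_congr fun i hi => if_pos hi]
        exact c4
      · funext t
        rw [if_neg (by omega)]
        congr 1; omega
      · funext t
        by_cases ht : t < k₂
        · simp only [if_pos ht]
        · simp only [if_neg ht]; exact (c3.2 t (by omega)).symm
    · -- terms agree
      rintro ⟨⟨k, lam', σ, v⟩, μ, ν, ℓ⟩ hp
      rw [Finset.mem_filter, Finset.mem_product] at hp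
      obtain ⟨⟨hq, -⟩, hcond⟩ := hp
      obtain ⟨g1, g2, g3, g4⟩ : μ ∈ G ∧ ν ∈ G ∧ μ + ν = lam' ∧ ℓ ≤ k := hcond
      obtain ⟨h1, h2, h3, h4⟩ := (hmem _).mp hq
      dsimp only at h3 ⊢
      have hinner : n ℓ ν (one σ) (bv b k v) =
          n ℓ ν (one σ) (bv b ℓ (fun t => if t < ℓ then v t else 0)) := by
        refine hnml.1 ℓ ν (one σ) _ _ ?_
        intro i hi
        simp only [bv, if_pos hi, if_pos (show i < k by omega)]
      have houter : ∀ y : D, (n (k - ℓ) μ y fun t => bv b k v (ℓ + t)) =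
          n (k - ℓ) μ y (bv b (k - ℓ) fun t => v (ℓ + t)) := by
        intro y
        refine hnml.1 (k - ℓ) μ y _ _ ?_
        intro i hi
        simp only [bv, if_pos (show ℓ + i < k by omega), if_pos hi]
      rw [houter, hinner]
  rw [hbij]
  rw [Finset.sum_finset_product' (f := fun o q' =>
      n o.1 o.2.1 (n q'.1 q'.2.1 (one q'.2.2.1) (bv b q'.1 q'.2.2.2)) (bv b o.1 o.2.2.2))
    _ ((KSet_finite hG lam).toFinset)
    (fun o => (KSet_finite hG o.2.2.1).toFinset)
    (fun p => by simp only [Set.Finite.mem_toFinset, Set.mem_setOf_eq])]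
  refine Finset.sum_eq_zero ?_
  intro o ho
  have hoG : o.2.2.1 ∈ G := by
    rw [Set.Finite.mem_toFinset] at ho
    exact ho.2.1
  have hφ : ∀ y y' : D, n o.1 o.2.1 (y + y') (bv b o.1 o.2.2.2) =
      n o.1 o.2.1 y (bv b o.1 o.2.2.2) + n o.1 o.2.1 y' (bv b o.1 o.2.2.2) :=
    fun y y' => hnml.2.1 o.1 o.2.1 y y' _
  let φ : D →+ D := AddMonoidHom.mk' (fun y => n o.1 o.2.1 y (bv b o.1 o.2.2.2)) hφ
  have h1 : (∑ q' ∈ (KSet_finite hG o.2.2.1).toFinset,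
      n o.1 o.2.1 (n q'.1 q'.2.1 (one q'.2.2.1) (bv b q'.1 q'.2.2.2)) (bv b o.1 o.2.2.2)) =
      φ (KFv hG b n one o.2.2.1) := by
    rw [KFv, map_sum]
    rfl
  rw [h1, hb _ hoG, map_zero]

end Steps

end MC35
namespace MC35

open scoped Classical

section Step2b

variable {G : Set ℝ} {C D : Type*} [AddCommGroup C] [AddCommGroup D]

lemma step2b (hG : IsDiscreteSubmonoid G) (b : ℝ → C) (m : ℕ → ℝ → (ℕ → C) → C)
    (n : ℕ → ℝ → D → (ℕ → C) → D) (one : ℝ → D)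
    (hml : OpsMultilinear m) (hnml : ModOpsMultilinear n) (lam : ℝ) :
    ∑ q ∈ (KSet_finite hG lam).toFinset,
      (∑ᶠ (μ : ℝ) (ν : ℝ) (k₂ : ℕ) (j : ℕ)
          (_ : μ ∈ G ∧ ν ∈ G ∧ μ + ν = q.2.1 ∧ j + k₂ ≤ q.1),
        n (q.1 + 1 - k₂) μ (one q.2.2.1)
          (insertAt (bv b q.1 q.2.2.2) j k₂ (m k₂ ν fun t => bv b q.1 q.2.2.2 (j + t)))) =
    ∑ o ∈ (ASet_finite hG lam).toFinset,
      n (o.1 + 1) o.2.2.1 (one o.2.2.2.1)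
        (Function.update (insertAt (bv b o.1 o.2.2.2.2.2) o.2.1 0 0) o.2.1
          (EFv hG b m o.2.2.2.2.1)) := by
  classical
  obtain ⟨KK, hKb⟩ := kBound hG lam
  set Gfl := (hG.finite_le lam).toFinset with hGfl
  have hmem : ∀ q : ℕ × ℝ × ℝ × (ℕ → ℝ), q ∈ (KSet_finite hG lam).toFinset ↔
      (q.2.1 ∈ G ∧ q.2.2.1 ∈ G ∧ Tup G q.1 q.2.2.2 ∧
        q.2.1 + q.2.2.1 + W q.1 q.2.2.2 = lam) := fun q => Set.Finite.mem_toFinset _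
  have hamem : ∀ o : ℕ × ℕ × ℝ × ℝ × ℝ × (ℕ → ℝ), o ∈ (ASet_finite hG lam).toFinset ↔
      (o.2.1 ≤ o.1 ∧ o.2.2.1 ∈ G ∧ o.2.2.2.1 ∈ G ∧ o.2.2.2.2.1 ∈ G ∧
        Tup G o.1 o.2.2.2.2.2 ∧
        o.2.2.1 + o.2.2.2.1 + o.2.2.2.2.1 + W o.1 o.2.2.2.2.2 = lam) :=
    fun o => Set.Finite.mem_toFinset _
  -- conversion of inner finsums to Finset sums
  have hconv : ∀ q ∈ (KSet_finite hG lam).toFinset,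
      (∑ᶠ (μ : ℝ) (ν : ℝ) (k₂ : ℕ) (j : ℕ)
          (_ : μ ∈ G ∧ ν ∈ G ∧ μ + ν = q.2.1 ∧ j + k₂ ≤ q.1),
        n (q.1 + 1 - k₂) μ (one q.2.2.1)
          (insertAt (bv b q.1 q.2.2.2) j k₂ (m k₂ ν fun t => bv b q.1 q.2.2.2 (j + t)))) =
      ∑ r ∈ Gfl ×ˢ Gfl ×ˢ Finset.range (KK + 1) ×ˢ Finset.range (KK + 1),
        if r.1 ∈ G ∧ r.2.1 ∈ G ∧ r.1 + r.2.1 = q.2.1 ∧ r.2.2.2 + r.2.2.1 ≤ q.1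
        then n (q.1 + 1 - r.2.2.1) r.1 (one q.2.2.1)
          (insertAt (bv b q.1 q.2.2.2) r.2.2.2 r.2.2.1
            (m r.2.2.1 r.2.1 fun t => bv b q.1 q.2.2.2 (r.2.2.2 + t))) else 0 := by
    intro q hq
    obtain ⟨h1, h2, h3, h4⟩ := (hmem q).mp hq
    have hWn := W_nonneg hG h3.1
    have hσ := hG.nonneg _ h2
    have hl1 := hG.nonneg _ h1
    have hkK : q.1 ≤ KK := hKb q.1 _ h3 (by linarith)
    refine finsum4_cond (M := D) _ _ _ _ _ _ ?_
    rintro μ ν k₂ j ⟨g1, g2, g3, g4⟩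
    have hμn := hG.nonneg _ g1
    have hνn := hG.nonneg _ g2
    refine ⟨?_, ?_, Finset.mem_range.mpr (by omega), Finset.mem_range.mpr (by omega)⟩
    · rw [hGfl, Set.Finite.mem_toFinset]; exact ⟨g1, by linarith⟩
    · rw [hGfl, Set.Finite.mem_toFinset]; exact ⟨g2, by linarith⟩
  rw [Finset.sum_congr rfl hconv]
  rw [← Finset.sum_product']
  rw [← Finset.sum_filter]
  -- the regrouped index set
  have hP2 : {p : (ℕ × ℕ × ℝ × ℝ × ℝ × (ℕ → ℝ)) × (ℕ × ℝ × (ℕ → ℝ)) |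
      p.1 ∈ ASet G lam ∧ p.2 ∈ ESet G p.1.2.2.2.2.1}.Finite := by
    refine Set.Finite.subset ((ASet_finite hG lam).prod (ESetLE_finite hG lam)) ?_
    rintro ⟨o, r⟩ ⟨ho, hr⟩
    refine ⟨ho, ?_⟩
    obtain ⟨a0, a1, a2, a3, a4, a5⟩ := ho
    have hWo := W_nonneg hG a4.1
    have hμo := hG.nonneg _ a1
    have hσo := hG.nonneg _ a2
    obtain ⟨c1, c2, c3⟩ := hr
    exact ⟨c1, c2, by linarith⟩
  have hbij : (∑ p ∈ ((KSet_finite hG lam).toFinset ×ˢ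
        (Gfl ×ˢ Gfl ×ˢ Finset.range (KK + 1) ×ˢ Finset.range (KK + 1))).filter
        (fun p => p.2.1 ∈ G ∧ p.2.2.1 ∈ G ∧ p.2.1 + p.2.2.1 = p.1.2.1 ∧
          p.2.2.2.2 + p.2.2.2.1 ≤ p.1.1),
        n (p.1.1 + 1 - p.2.2.2.1) p.2.1 (one p.1.2.2.1)
          (insertAt (bv b p.1.1 p.1.2.2.2) p.2.2.2.2 p.2.2.2.1
            (m p.2.2.2.1 p.2.2.1 fun t => bv b p.1.1 p.1.2.2.2 (p.2.2.2.2 + t)))) =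
      ∑ p ∈ hP2.toFinset,
        n (p.1.1 + 1) p.1.2.2.1 (one p.1.2.2.2.1)
          (Function.update (insertAt (bv b p.1.1 p.1.2.2.2.2.2) p.1.2.1 0 0) p.1.2.1
            (m p.2.1 p.2.2.1 (bv b p.2.1 p.2.2.2))) := by
    refine Finset.sum_nbij'
      (i := fun p => ((p.1.1 - p.2.2.2.1, p.2.2.2.2, p.2.1, p.1.2.2.1,
        p.2.2.1 + W p.2.2.2.1 (fun t => if t < p.2.2.2.1 then p.1.2.2.2 (p.2.2.2.2 + t) else 0),
        fun t => if t < p.2.2.2.2 then p.1.2.2.2 t else p.1.2.2.2 (t + p.2.2.2.1)),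
        (p.2.2.2.1, p.2.2.1,
          fun t => if t < p.2.2.2.1 then p.1.2.2.2 (p.2.2.2.2 + t) else 0)))
      (j := fun p => ((p.2.1 + p.1.1, p.1.2.2.1 + p.2.2.1, p.1.2.2.2.1,
        fun t => if t < p.1.2.1 then p.1.2.2.2.2.2 t
          else if t < p.1.2.1 + p.2.1 then p.2.2.2 (t - p.1.2.1)
          else p.1.2.2.2.2.2 (t - p.2.1)),
        (p.1.2.2.1, p.2.2.1, p.2.1, p.1.2.1)))
      ?_ ?_ ?_ ?_ ?_
    · -- hi
      rintro ⟨⟨k, lam', σ, v⟩, μ, ν, k₂, j⟩ hp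
      rw [Finset.mem_filter, Finset.mem_product] at hp
      obtain ⟨⟨hq, -⟩, hcond⟩ := hp
      obtain ⟨g1, g2, g3, g4⟩ : μ ∈ G ∧ ν ∈ G ∧ μ + ν = lam' ∧ j + k₂ ≤ k := hcond
      obtain ⟨h1, h2, h3, h4⟩ := (hmem _).mp hq
      dsimp only at h1 h2 h3 h4
      rw [Set.Finite.mem_toFinset]
      simp only [Set.mem_setOf_eq]
      -- key weight identity
      have hWu : W k₂ (fun t => if t < k₂ then v (j + t) else 0) =
          W k₂ (fun t => v (j + t)) := W_congr fun i hi => if_pos hi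
      have hWkey : W k v = W k₂ (fun t => if t < k₂ then v (j + t) else 0) +
          W (k - k₂) (fun t => if t < j then v t else v (t + k₂)) := by
        have e1 : W k v = W j v + W (k - j) (fun t => v (j + t)) := W_split v (by omega)
        have e2 : W (k - j) (fun t => v (j + t)) = W k₂ (fun t => v (j + t)) +
            W (k - j - k₂) (fun t => v (j + (k₂ + t))) := W_split _ (by omega)
        have e3 : W (k - k₂) (fun t => if t < j then v t else v (t + k₂)) =
            W j (fun t => if t < j then v t else v (t + k₂)) +
            W (k - k₂ - j) (fun t => if j + t < j then v (j + t) else v (j + t + k₂)) :=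
          W_split _ (by omega)
        have e4 : W j (fun t => if t < j then v t else v (t + k₂)) = W j v :=
          W_congr fun i hi => if_pos hi
        have e5 : W (k - k₂ - j) (fun t => if j + t < j then v (j + t) else v (j + t + k₂)) =
            W (k - j - k₂) (fun t => v (j + (k₂ + t))) := by
          rw [show k - k₂ - j = k - j - k₂ from by omega]
          exact W_congr fun i hi => by rw [if_neg (by omega)]; exact congrArg v (by omega)
        rw [hWu, e1, e2, e3, e4, e5]; ring
      refine ⟨⟨?_, g1, h2, ?_, ⟨?_, ?_⟩, ?_⟩, g2, ⟨?_, ?_⟩, rfl⟩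
      · dsimp only; omega
      · -- ρ ∈ G
        refine hG.add_mem _ g2 _ (W_mem hG fun i hi => ?_)
        rw [if_pos hi]; exact (h3.1 _ (by omega)).1
      · -- Tup for w, positivity
        intro i hi
        dsimp only at hi ⊢
        by_cases hij : i < j
        · rw [if_pos hij]; exact h3.1 i (by omega)
        · rw [if_neg hij]; exact h3.1 (i + k₂) (by omega)
      · -- Tup for w, padding
        intro i hi
        dsimp only at hi ⊢
        rw [if_neg (by omega)]
        exact h3.2 (i + k₂) (by omega)
      · -- sum identity for o-part
        dsimp only
        linarith [hWkey, h4, g3]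
      · -- Tup for u, positivity
        intro i hi
        dsimp only at hi ⊢
        rw [if_pos hi]; exact h3.1 (j + i) (by omega)
      · -- Tup for u, padding
        intro i hi
        dsimp only at hi ⊢
        rw [if_neg (by omega)]
    · -- hj
      rintro ⟨⟨k', j, μ, σ, ρ, w⟩, k₂, ν, u⟩ hp
      rw [Set.Finite.mem_toFinset] at hp
      obtain ⟨ho, hr⟩ := hp
      obtain ⟨a0, a1, a2, a3, a4, a5⟩ : j ≤ k' ∧ μ ∈ G ∧ σ ∈ G ∧ ρ ∈ G ∧ Tup G k' w ∧
        μ + σ + ρ + W k' w = lam := ho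
      obtain ⟨c1, c2, c3⟩ : ν ∈ G ∧ Tup G k₂ u ∧ ν + W k₂ u = ρ := hr
      have hWw := W_nonneg hG a4.1
      have hWu := W_nonneg hG c2.1
      have hμn := hG.nonneg _ a1
      have hρn := hG.nonneg _ a3
      have hνn := hG.nonneg _ c1
      have hσn := hG.nonneg _ a2
      set v3 : ℕ → ℝ := fun t => if t < j then w t
        else if t < j + k₂ then u (t - j) else w (t - k₂) with hv3
      have hTup : Tup G (k₂ + k') v3 := by
        constructor
        · intro i hi
          rw [hv3]
          dsimp only
          by_cases h1 : i < j
          · rw [if_pos h1]; exact a4.1 i (by omega)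
          · rw [if_neg h1]
            by_cases h2 : i < j + k₂
            · rw [if_pos h2]; exact c2.1 (i - j) (by omega)
            · rw [if_neg h2]; exact a4.1 (i - k₂) (by omega)
        · intro i hi
          rw [hv3]
          dsimp only
          rw [if_neg (by omega), if_neg (by omega)]
          exact a4.2 (i - k₂) (by omega)
      have hWsp : W (k₂ + k') v3 = W k₂ u + W k' w := by
        have e1 : W (k₂ + k') v3 = W j v3 + W (k₂ + k' - j) (fun t => v3 (j + t)) :=
          W_split _ (by omega)
        have e2 : W j v3 = W j w := W_congr fun i hi => by rw [hv3]; exact if_pos hi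
        have e3 : W (k₂ + k' - j) (fun t => v3 (j + t)) =
            W k₂ (fun t => v3 (j + t)) + W (k₂ + k' - j - k₂) (fun t => v3 (j + (k₂ + t))) :=
          W_split _ (by omega)
        have e4 : W k₂ (fun t => v3 (j + t)) = W k₂ u := by
          refine W_congr fun i hi => ?_
          rw [hv3]; dsimp only
          rw [if_neg (by omega), if_pos (by omega)]
          exact congrArg u (by omega)
        have e5 : W (k₂ + k' - j - k₂) (fun t => v3 (j + (k₂ + t))) =
            W (k' - j) (fun t => w (j + t)) := by
          rw [show k₂ + k' - j - k₂ = k' - j from by omega]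
          refine W_congr fun i hi => ?_
          rw [hv3]; dsimp only
          rw [if_neg (by omega), if_neg (by omega)]
          exact congrArg w (by omega)
        have e6 : W k' w = W j w + W (k' - j) (fun t => w (j + t)) := W_split _ (by omega)
        rw [e1, e2, e3, e4, e5, e6]; ring
      have hsum : (μ + ν) + σ + W (k₂ + k') v3 = lam := by rw [hWsp]; linarith
      rw [Finset.mem_filter, Finset.mem_product]
      refine ⟨⟨(hmem _).mpr ⟨hG.add_mem _ a1 _ c1, a2, hTup, hsum⟩, ?_⟩, a1, c1, rfl,
        by dsimp only; omega⟩
      rw [Finset.mem_product, Finset.mem_product, Finset.mem_product]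
      have hk12 : k₂ + k' ≤ KK := hKb _ _ hTup (by rw [hWsp]; linarith)
      refine ⟨?_, ?_, Finset.mem_range.mpr (by dsimp only; omega),
        Finset.mem_range.mpr (by dsimp only; omega)⟩
      · rw [hGfl, Set.Finite.mem_toFinset]; exact ⟨a1, by linarith⟩
      · rw [hGfl, Set.Finite.mem_toFinset]; exact ⟨c1, by linarith⟩
    · -- left inverse
      rintro ⟨⟨k, lam', σ, v⟩, μ, ν, k₂, j⟩ hp
      rw [Finset.mem_filter, Finset.mem_product] at hp
      obtain ⟨⟨hq, -⟩, hcond⟩ := hp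
      obtain ⟨g1, g2, g3, g4⟩ : μ ∈ G ∧ ν ∈ G ∧ μ + ν = lam' ∧ j + k₂ ≤ k := hcond
      dsimp only
      refine pairEq (prodEq4 (by omega) g3 rfl ?_) rfl
      funext t
      by_cases h1 : t < j
      · rw [if_pos h1, if_pos h1]
      · rw [if_neg h1]
        by_cases h2 : t < j + k₂
        · rw [if_pos h2, if_pos (by omega)]
          exact congrArg v (by omega)
        · rw [if_neg h2, if_neg (by omega)]
          exact congrArg v (by omega)
    · -- right inverse
      rintro ⟨⟨k', j, μ, σ, ρ, w⟩, k₂, ν, u⟩ hp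
      rw [Set.Finite.mem_toFinset] at hp
      obtain ⟨ho, hr⟩ := hp
      obtain ⟨a0, a1, a2, a3, a4, a5⟩ : j ≤ k' ∧ μ ∈ G ∧ σ ∈ G ∧ ρ ∈ G ∧ Tup G k' w ∧
        μ + σ + ρ + W k' w = lam := ho
      obtain ⟨c1, c2, c3⟩ : ν ∈ G ∧ Tup G k₂ u ∧ ν + W k₂ u = ρ := hr
      dsimp only
      refine pairEq (prodEq6 (by omega) rfl rfl rfl ?_ ?_) (prodEq3 rfl rfl ?_)
      · -- ρ component
        rw [show W k₂ (fun t => if t < k₂ then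
            (if j + t < j then w (j + t)
              else if j + t < j + k₂ then u (j + t - j) else w (j + t - k₂)) else 0) =
            W k₂ u from W_congr fun i hi => by
          rw [if_pos hi, if_neg (by omega), if_pos (by omega)]
          exact congrArg u (by omega)]
        exact c3
      · -- w component
        funext t
        by_cases h1 : t < j
        · rw [if_pos h1, if_pos h1]
        · rw [if_neg h1, if_neg (by omega : ¬ t + k₂ < j), if_neg (by omega : ¬ t + k₂ < j + k₂)]
          exact congrArg w (by omega)
      · -- u component
        funext t
        by_cases h1 : t < k₂
        · rw [if_pos h1, if_neg (by omega : ¬ j + t < j), if_pos (by omega : j + t < j + k₂)]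
          exact congrArg u (by omega)
        · rw [if_neg h1]
          exact (c2.2 t (by omega)).symm
    · -- terms agree
      rintro ⟨⟨k, lam', σ, v⟩, μ, ν, k₂, j⟩ hp
      rw [Finset.mem_filter, Finset.mem_product] at hp
      obtain ⟨⟨hq, -⟩, hcond⟩ := hp
      obtain ⟨g1, g2, g3, g4⟩ : μ ∈ G ∧ ν ∈ G ∧ μ + ν = lam' ∧ j + k₂ ≤ k := hcond
      obtain ⟨h1, h2, h3, h4⟩ := (hmem _).mp hq
      dsimp only at h3 ⊢
      have hinner : (m k₂ ν fun t => bv b k v (j + t)) =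
          m k₂ ν (bv b k₂ (fun t => if t < k₂ then v (j + t) else 0)) := by
        refine hml.1 k₂ ν _ _ ?_
        intro i hi
        simp only [bv, if_pos hi, if_pos (show j + i < k by omega)]
      have houter : n (k - k₂ + 1) μ (one σ)
          (insertAt (bv b k v) j k₂
            (m k₂ ν (bv b k₂ (fun t => if t < k₂ then v (j + t) else 0)))) =
          n (k - k₂ + 1) μ (one σ)
          (Function.update (insertAt
              (bv b (k - k₂) (fun t => if t < j then v t else v (t + k₂))) j 0 0) j
            (m k₂ ν (bv b k₂ (fun t => if t < k₂ then v (j + t) else 0)))) := by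
        refine hnml.1 (k - k₂ + 1) μ (one σ) _ _ ?_
        intro i hi
        by_cases hieq : i = j
        · subst hieq
          simp only [insertAt, Function.update_apply, lt_irrefl, if_false, eq_self_iff_true,
            if_true]
        · by_cases hij : i < j
          · simp only [insertAt, Function.update_apply, bv, if_pos hij, if_neg hieq,
              if_pos (show i < k by omega), if_pos (show i < k - k₂ by omega)]
          · simp only [insertAt, Function.update_apply, bv, if_neg hij, if_neg hieq,
              if_pos (show i + k₂ - 1 < k by omega), if_pos (show i + 0 - 1 < k - k₂ by omega),
              if_neg (show ¬ i + 0 - 1 < j by omega)]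
            exact congrArg (fun s => b (v s)) (by omega)
      rw [show k + 1 - k₂ = k - k₂ + 1 from by omega, hinner, houter]
  rw [hbij]
  rw [Finset.sum_finset_product' (f := fun o r =>
      n (o.1 + 1) o.2.2.1 (one o.2.2.2.1)
        (Function.update (insertAt (bv b o.1 o.2.2.2.2.2) o.2.1 0 0) o.2.1
          (m r.1 r.2.1 (bv b r.1 r.2.2))))
    _ ((ASet_finite hG lam).toFinset)
    (fun o => (ESet_finite hG o.2.2.2.2.1).toFinset)
    (fun p => by simp only [Set.Finite.mem_toFinset, Set.mem_setOf_eq])]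
  refine Finset.sum_congr rfl ?_
  intro o ho
  have hjlt : o.2.1 < o.1 + 1 := by
    have := ((hamem o).mp ho).1
    omega
  have hψ : ∀ a a' : C,
      n (o.1 + 1) o.2.2.1 (one o.2.2.2.1)
        (Function.update (insertAt (bv b o.1 o.2.2.2.2.2) o.2.1 0 0) o.2.1 (a + a')) =
      n (o.1 + 1) o.2.2.1 (one o.2.2.2.1)
        (Function.update (insertAt (bv b o.1 o.2.2.2.2.2) o.2.1 0 0) o.2.1 a) +
      n (o.1 + 1) o.2.2.1 (one o.2.2.2.1)
        (Function.update (insertAt (bv b o.1 o.2.2.2.2.2) o.2.1 0 0) o.2.1 a') :=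
    fun a a' => hnml.2.2 (o.1 + 1) o.2.2.1 (one o.2.2.2.1) _ o.2.1 hjlt a a'
  let ψ : C →+ D := AddMonoidHom.mk' (fun a =>
    n (o.1 + 1) o.2.2.1 (one o.2.2.2.1)
      (Function.update (insertAt (bv b o.1 o.2.2.2.2.2) o.2.1 0 0) o.2.1 a)) hψ
  have h1 : (∑ r ∈ (ESet_finite hG o.2.2.2.2.1).toFinset,
      n (o.1 + 1) o.2.2.1 (one o.2.2.2.1)
        (Function.update (insertAt (bv b o.1 o.2.2.2.2.2) o.2.1 0 0) o.2.1
          (m r.1 r.2.1 (bv b r.1 r.2.2)))) = ψ (EFv hG b m o.2.2.2.2.1) := by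
    rw [EFv, map_sum]
    rfl
  rw [h1]
  rfl

end Step2b

end MC35
namespace MC35

open scoped Classical

section Main

variable {G : Set ℝ} {C D : Type*} [AddCommGroup C] [AddCommGroup D]

lemma EFv_zero (hG : IsDiscreteSubmonoid G) (b : ℝ → C) (m : ℕ → ℝ → (ℕ → C) → C)
    (hm0 : ∀ x : ℕ → C, m 0 0 x = 0) : EFv hG b m 0 = 0 := by
  rw [EFv]
  refine Finset.sum_eq_zero ?_
  intro p hp
  rw [Set.Finite.mem_toFinset] at hp
  obtain ⟨h1, h2, h3⟩ := hp
  have hWn := W_nonneg hG h2.1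
  have hμn := hG.nonneg _ h1
  have hμ0 : p.2.1 = 0 := by linarith
  have hW0 : W p.1 p.2.2 = 0 := by linarith
  have hk0 : p.1 = 0 := W_eq_zero_iff h2 hW0
  rw [hμ0, hk0, hm0]

lemma main (hG : IsDiscreteSubmonoid G) (b : ℝ → C)
    (m : ℕ → ℝ → (ℕ → C) → C) (n : ℕ → ℝ → D → (ℕ → C) → D) (one : ℝ → D)
    (hml : OpsMultilinear m) (hm0 : ∀ x : ℕ → C, m 0 0 x = 0)
    (hnml : ModOpsMultilinear n)
    (hnrel : ∀ lam ∈ G, ∀ (k : ℕ) (y : D) (x : ℕ → C),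
      (∑ᶠ (μ : ℝ) (ν : ℝ) (ℓ : ℕ)
          (_ : μ ∈ G ∧ ν ∈ G ∧ μ + ν = lam ∧ ℓ ≤ k),
        n (k - ℓ) μ (n ℓ ν y x) fun t => x (ℓ + t))
      +
      (∑ᶠ (μ : ℝ) (ν : ℝ) (k₂ : ℕ) (j : ℕ)
          (_ : μ ∈ G ∧ ν ∈ G ∧ μ + ν = lam ∧ j + k₂ ≤ k),
        n (k + 1 - k₂) μ y (insertAt x j k₂ (m k₂ ν fun t => x (j + t)))) = 0)
    (hinj : Function.Injective (fun x : C => n 1 0 (one 0) fun _ => x))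
    (hb : ∀ ρ ∈ G, KFv hG b n one ρ = 0) :
    ∀ lam ∈ G, 0 < lam → EFv hG b m lam = 0 := by
  classical
  -- `n` of the zero tuple vanishes
  have hn0 : n 1 0 (one 0) (fun _ => (0 : C)) = 0 := by
    have h := hnml.2.2 1 0 (one 0) (fun _ => (0 : C)) 0 (by omega) 0 0
    rw [add_zero] at h
    have h2 : Function.update (fun _ => (0 : C)) 0 (0 : C) = fun _ => (0 : C) := by
      funext t
      simp [Function.update_apply]
    rw [h2] at h
    have h3 : n 1 0 (one 0) (fun _ => (0 : C)) + 0 =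
        n 1 0 (one 0) (fun _ => (0 : C)) + n 1 0 (one 0) (fun _ => (0 : C)) := by
      rw [add_zero]; exact h
    exact (add_left_cancel h3).symm
  -- the master identity coming from the module relations and `d^b(𝟏) = 0`
  have hkey : ∀ lam ∈ G,
      (∑ o ∈ (ASet_finite hG lam).toFinset,
        n (o.1 + 1) o.2.2.1 (one o.2.2.2.1)
          (Function.update (insertAt (bv b o.1 o.2.2.2.2.2) o.2.1 0 0) o.2.1
            (EFv hG b m o.2.2.2.2.1))) = 0 := by
    intro lam hlam
    have hrel : ∀ q ∈ (KSet_finite hG lam).toFinset,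
        (∑ᶠ (μ : ℝ) (ν : ℝ) (ℓ : ℕ)
            (_ : μ ∈ G ∧ ν ∈ G ∧ μ + ν = q.2.1 ∧ ℓ ≤ q.1),
          n (q.1 - ℓ) μ (n ℓ ν (one q.2.2.1) (bv b q.1 q.2.2.2))
            fun t => bv b q.1 q.2.2.2 (ℓ + t))
        +
        (∑ᶠ (μ : ℝ) (ν : ℝ) (k₂ : ℕ) (j : ℕ)
            (_ : μ ∈ G ∧ ν ∈ G ∧ μ + ν = q.2.1 ∧ j + k₂ ≤ q.1),
          n (q.1 + 1 - k₂) μ (one q.2.2.1)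
            (insertAt (bv b q.1 q.2.2.2) j k₂
              (m k₂ ν fun t => bv b q.1 q.2.2.2 (j + t)))) = 0 := by
      intro q hq
      have hq' := (Set.Finite.mem_toFinset _).mp hq
      exact hnrel q.2.1 hq'.1 q.1 (one q.2.2.1) (bv b q.1 q.2.2.2)
    have hzero := Finset.sum_eq_zero hrel
    rw [Finset.sum_add_distrib] at hzero
    rw [step2a hG b n one hnml hb lam, step2b hG b m n one hml hnml lam, zero_add] at hzero
    exact hzero
  -- strong induction on the number of elements of `G` strictly between `0` and `lam`
  suffices H : ∀ N : ℕ, ∀ lam, lam ∈ G → 0 < lam →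
      ((hG.finite_le lam).toFinset.filter (fun x => 0 < x ∧ x < lam)).card = N →
      EFv hG b m lam = 0 by
    intro lam h1 h2
    exact H _ lam h1 h2 rfl
  intro N
  induction N using Nat.strong_induction_on with
  | _ N IH =>
  intro lam hlam hpos hcard
  have hbase : ((0, 0, 0, 0, lam, fun _ => (0 : ℝ)) : ℕ × ℕ × ℝ × ℝ × ℝ × (ℕ → ℝ))
      ∈ (ASet_finite hG lam).toFinset := by
    rw [Set.Finite.mem_toFinset]
    refine ⟨le_refl 0, hG.zero_mem, hG.zero_mem, hlam, tup_zero_fun, ?_⟩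
    simp [W]
  have hother : ∀ o ∈ (ASet_finite hG lam).toFinset,
      o ≠ ((0, 0, 0, 0, lam, fun _ => (0 : ℝ)) : ℕ × ℕ × ℝ × ℝ × ℝ × (ℕ → ℝ)) →
      n (o.1 + 1) o.2.2.1 (one o.2.2.2.1)
        (Function.update (insertAt (bv b o.1 o.2.2.2.2.2) o.2.1 0 0) o.2.1
          (EFv hG b m o.2.2.2.2.1)) = 0 := by
    rintro ⟨k', j, μ, σ, ρ, w⟩ ho hne
    rw [Set.Finite.mem_toFinset] at ho
    obtain ⟨a0, a1, a2, a3, a4, a5⟩ : j ≤ k' ∧ μ ∈ G ∧ σ ∈ G ∧ ρ ∈ G ∧ Tup G k' w ∧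
      μ + σ + ρ + W k' w = lam := ho
    dsimp only at hne ⊢
    have hWn := W_nonneg hG a4.1
    have hμn := hG.nonneg _ a1
    have hσn := hG.nonneg _ a2
    have hρn := hG.nonneg _ a3
    have hρlt : ρ < lam := by
      rcases eq_or_lt_of_le (show ρ ≤ lam by linarith) with he | hlt
      · exfalso
        have hμ0 : μ = 0 := by linarith
        have hσ0 : σ = 0 := by linarith
        have hW0 : W k' w = 0 := by linarith
        have hk0 : k' = 0 := W_eq_zero_iff a4 hW0
        have hj0 : j = 0 := by omega
        subst hk0
        have hw : w = fun _ => 0 := Tup_zero a4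
        exact hne (by rw [hμ0, hσ0, hj0, hw, he])
      · exact hlt
    have hEρ : EFv hG b m ρ = 0 := by
      rcases eq_or_lt_of_le hρn with he0 | hpos0
      · rw [← he0]
        exact EFv_zero hG b m hm0
      · -- use the induction hypothesis
        have hsub : (hG.finite_le ρ).toFinset.filter (fun x => 0 < x ∧ x < ρ) ⊆
            (hG.finite_le lam).toFinset.filter (fun x => 0 < x ∧ x < lam) := by
          intro x hx
          rw [Finset.mem_filter, Set.Finite.mem_toFinset] at hx ⊢
          exact ⟨⟨hx.1.1, by linarith [hx.2.2]⟩, hx.2.1, by linarith [hx.2.2]⟩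
        have hssub : (hG.finite_le ρ).toFinset.filter (fun x => 0 < x ∧ x < ρ) ⊂
            (hG.finite_le lam).toFinset.filter (fun x => 0 < x ∧ x < lam) := by
          rw [Finset.ssubset_iff_of_subset hsub]
          refine ⟨ρ, ?_, ?_⟩
          · rw [Finset.mem_filter, Set.Finite.mem_toFinset]
            exact ⟨⟨a3, by linarith⟩, hpos0, hρlt⟩
          · rw [Finset.mem_filter]
            rintro ⟨-, -, hltρ⟩
            exact lt_irrefl ρ hltρ
        have hlt : ((hG.finite_le ρ).toFinset.filter (fun x => 0 < x ∧ x < ρ)).card < N := by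
          rw [← hcard]
          exact Finset.card_lt_card hssub
        exact IH _ hlt ρ a3 hpos0 rfl
    rw [hEρ]
    -- additivity in the distinguished slot kills the term
    have h := hnml.2.2 (k' + 1) μ (one σ) (insertAt (bv b k' w) j 0 0) j (by omega) 0 0
    rw [add_zero] at h
    have h3 : n (k' + 1) μ (one σ) (Function.update (insertAt (bv b k' w) j 0 0) j 0) + 0 =
        n (k' + 1) μ (one σ) (Function.update (insertAt (bv b k' w) j 0 0) j 0) +
        n (k' + 1) μ (one σ) (Function.update (insertAt (bv b k' w) j 0 0) j 0) := by
      rw [add_zero]; exact h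
    exact (add_left_cancel h3).symm
  have hA := hkey lam hlam
  rw [Finset.sum_eq_single_of_mem _ hbase hother] at hA
  dsimp only at hA
  have heq : n (0 + 1) 0 (one 0)
      (Function.update (insertAt (bv b 0 fun _ => (0 : ℝ)) 0 0 0) 0 (EFv hG b m lam)) =
      n 1 0 (one 0) (fun _ => EFv hG b m lam) := by
    refine hnml.1 1 0 (one 0) _ _ ?_
    intro i hi
    have hi0 : i = 0 := by omega
    subst hi0
    simp [Function.update_apply]
  rw [heq] at hA
  refine hinj ?_
  show n 1 0 (one 0) (fun _ => EFv hG b m lam) = n 1 0 (one 0) (fun _ => (0 : C))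
  rw [hA, hn0]

end Main

end MC35
/-- **Maurer–Cartan half of Proposition 3.5.** If `b` is a `G`-gapped element of `C ⊗ Λ₊`
satisfying `d^b(𝟏) = 0`, then `b` satisfies the Maurer–Cartan equation, i.e. `b` is a
bounding cochain. -/
theorem fukaya_prop_3_5_maurer_cartan (G : Set ℝ) (hG : IsDiscreteSubmonoid G)
    {C D : Type*} [AddCommGroup C] [Module (ZMod 2) C] [AddCommGroup D] [Module (ZMod 2) D]
    (m : ℕ → ℝ → (ℕ → C) → C) (n : ℕ → ℝ → D → (ℕ → C) → D) (one : ℝ → D)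
    (hm : IsGappedAInfAlgebra G m) (hn : IsGappedAInfModule G m n)
    (hone : IsCyclicElement n one)
    (b : ℝ → C) (hb : KillsOne G n one b) :
    IsBoundingCochain G m b := by
  intro lam hlam hpos
  rw [MC35.convE hG b m lam]
  exact MC35.main hG b m n one hm.1 hm.2.1 hn.1 hn.2 hone.1.injective
    (fun ρ hρ => by rw [MC35.KFv, ← MC35.convK hG b n one ρ]; exact hb ρ hρ) lam hlam hpos
end
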